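/- arXiv:2103.15097 — 6 statements merged into one kernel-verified Lean document; each statement's English description precedes it below -/
import Mathlib

section
/- Let Φ : [a,b] → ℝ^{n×n} satisfy the matrix ODE Φ'(t) = A(t)Φ(t) with Φ(a) = I_n, where A is continuous. Then for each k ∈ {1,…,n}, Φ^{(k)}(t) satisfies (d/dt)Φ^{(k)}(t) = A^{[k]}(t) Φ^{(k)}(t) with Φ^{(k)}(a) = I_{binom(n,k)}. -/
/-!
The minors of a product are given by Cauchy–Binet, i.e. by functoriality of `⋀^k`, so
`(M N)^{(k)} = M^{(k)} N^{(k)}`. A `k × k` minor is a polynomial, hence differentiable, function of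
the matrix, so its derivative along the curve `Φ` at `t` only depends on the velocity
`Φ'(t) = A(t) Φ(t)`: the curve may be replaced by the line
`ε ↦ Φ(t) + ε A(t) Φ(t) = (1 + ε A(t)) Φ(t)`, whose compound is `(1 + ε A(t))^{(k)} Φ^{(k)}(t)`.
Differentiating at `ε = 0` gives `A^{[k]}(t) Φ^{(k)}(t)`.
-/

open Matrix

/-- The `k`-multiplicative compound of a matrix: the matrix of all `k × k` minors,
indexed by the `k`-element subsets of the row and column index sets (ordered
increasingly / lexicographically). -/
noncomputable def mulCompound {𝕜 : Type*} [CommRing 𝕜] {n m : ℕ}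
    (A : Matrix (Fin n) (Fin m) 𝕜) (k : ℕ) :
    Matrix {s : Finset (Fin n) // s.card = k} {t : Finset (Fin m) // t.card = k} 𝕜 :=
  fun α β => (A.submatrix (α.1.orderEmbOfFin α.2) (β.1.orderEmbOfFin β.2)).det

/-- The `k`-additive compound: `A^{[k]} := (d/dε) (I + ε A)^{(k)} |_{ε = 0}`. -/
noncomputable def addCompound {𝕜 : Type*} [NontriviallyNormedField 𝕜] {n : ℕ}
    (A : Matrix (Fin n) (Fin n) 𝕜) (k : ℕ) :
    Matrix {s : Finset (Fin n) // s.card = k} {s : Finset (Fin n) // s.card = k} 𝕜 :=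
  fun α β => deriv (fun ε : 𝕜 => mulCompound (1 + ε • A) k α β) 0

open Module exteriorPower

def cardEqEquivPowersetCard (ι : Type*) (k : ℕ) :
    {s : Finset ι // s.card = k} ≃ Set.powersetCard ι k :=
  Equiv.subtypeEquivRight fun _ => Iff.rfl

section Algebra

variable {R : Type*} [CommRing R] {l m n : ℕ}

theorem mulCompound_eq_toMatrix_map (M : Matrix (Fin m) (Fin n) R) (k : ℕ) :
    mulCompound M k =
      (LinearMap.toMatrix ((Pi.basisFun R (Fin n)).exteriorPower k)
        ((Pi.basisFun R (Fin m)).exteriorPower k) (map k (toLin' M))).submatrix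
        (cardEqEquivPowersetCard _ k) (cardEqEquivPowersetCard _ k) := by
  ext α β
  rw [submatrix_apply, LinearMap.toMatrix_apply, basis_apply, map_apply_ιMulti_family,
    basis_repr_apply, ιMulti_family, ιMultiDual_apply_ιMulti]
  simp only [Basis.coord_apply, Pi.basisFun_repr, Function.comp_apply, Pi.basisFun_apply,
    toLin'_apply, mulVec_single_one]
  -- the exterior-power coordinate is the minor of the transpose
  rw [← det_transpose]
  rfl

theorem mulCompound_mul (M : Matrix (Fin l) (Fin m) R) (N : Matrix (Fin m) (Fin n) R) (k : ℕ) :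
    mulCompound (M * N) k = mulCompound M k * mulCompound N k := by
  simp only [mulCompound_eq_toMatrix_map, toLin'_mul, map_comp,
    LinearMap.toMatrix_comp _ ((Pi.basisFun R (Fin m)).exteriorPower k), submatrix_mul_equiv]

theorem mulCompound_one (k : ℕ) : mulCompound (1 : Matrix (Fin n) (Fin n) R) k = 1 := by
  rw [mulCompound_eq_toMatrix_map, toLin'_one, exteriorPower.map_id, LinearMap.toMatrix_id,
    submatrix_one_equiv]

end Algebra

section Calculus

variable {𝕜 : Type*} [NontriviallyNormedField 𝕜]

theorem DifferentiableAt.hasDerivAt_comp_of_hasDerivAt_line {E F : Type*}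
    [NormedAddCommGroup E] [NormedSpace 𝕜 E] [NormedAddCommGroup F] [NormedSpace 𝕜 F]
    {f : E → F} {γ : 𝕜 → E} {t : 𝕜} {v : E} {c : F} (hf : DifferentiableAt 𝕜 f (γ t))
    (hγ : HasDerivAt γ v t) (hline : HasDerivAt (fun ε : 𝕜 => f (γ t + ε • v)) c 0) :
    HasDerivAt (fun s => f (γ s)) c t := by
  have hline' : HasDerivAt (fun ε : 𝕜 => γ t + ε • v) v 0 := by
    simpa using ((hasDerivAt_id (0 : 𝕜)).smul_const v).const_add (γ t)
  have hf' : HasFDerivAt f (fderiv 𝕜 f (γ t)) (γ t + (0 : 𝕜) • v) := by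
    simpa using hf.hasFDerivAt
  rw [hline.unique (hf'.comp_hasDerivAt 0 hline')]
  exact hf.hasFDerivAt.comp_hasDerivAt t hγ

attribute [local instance] Matrix.normedAddCommGroup Matrix.normedSpace

variable {m n : ℕ}

theorem differentiable_mulCompound_apply (k : ℕ) (α : {s : Finset (Fin m) // s.card = k})
    (β : {s : Finset (Fin n) // s.card = k}) :
    Differentiable 𝕜 (fun M : Matrix (Fin m) (Fin n) 𝕜 => mulCompound M k α β) := by
  simp only [mulCompound, det_apply, submatrix_apply]
  fun_prop

theorem hasDerivAt_mulCompound_one_add_smul (A : Matrix (Fin n) (Fin n) 𝕜) (k : ℕ)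
    (α β : {s : Finset (Fin n) // s.card = k}) :
    HasDerivAt (fun ε : 𝕜 => mulCompound (1 + ε • A) k α β) (addCompound A k α β) 0 :=
  ((differentiable_mulCompound_apply k α β).comp (f := fun ε : 𝕜 => 1 + ε • A)
    (by fun_prop)).differentiableAt.hasDerivAt

theorem hasDerivAt_mulCompound_apply {Φ : 𝕜 → Matrix (Fin n) (Fin m) 𝕜}
    {A : Matrix (Fin n) (Fin n) 𝕜} {t : 𝕜}
    (hΦ : ∀ i j, HasDerivAt (fun s => Φ s i j) ((A * Φ t) i j) t) (k : ℕ)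
    (α : {s : Finset (Fin n) // s.card = k}) (β : {s : Finset (Fin m) // s.card = k}) :
    HasDerivAt (fun s => mulCompound (Φ s) k α β)
      ((addCompound A k * mulCompound (Φ t) k) α β) t := by
  refine DifferentiableAt.hasDerivAt_comp_of_hasDerivAt_line (f := fun M => mulCompound M k α β)
    (differentiable_mulCompound_apply k α β _)
    (hasDerivAt_pi.2 fun i => hasDerivAt_pi.2 (hΦ i)) ?_
  have hline : ∀ ε : 𝕜, Φ t + ε • (A * Φ t) = (1 + ε • A) * Φ t := by
    intro ε
    rw [Matrix.add_mul, Matrix.one_mul, Matrix.smul_mul]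
  simp only [hline, mulCompound_mul, mul_apply]
  exact HasDerivAt.fun_sum fun γ _ => (hasDerivAt_mulCompound_one_add_smul A k α γ).mul_const _

end Calculus

theorem mulCompound_ode_general {n : ℕ} (a b : ℝ)
    (A Φ : ℝ → Matrix (Fin n) (Fin n) ℝ)
    (hΦ : ∀ t ∈ Set.Icc a b, ∀ i j, HasDerivAt (fun s => Φ s i j) ((A t * Φ t) i j) t)
    (hΦa : Φ a = 1)
    (k : ℕ) :
    (∀ t ∈ Set.Icc a b, ∀ α β, HasDerivAt (fun s => mulCompound (Φ s) k α β)
        ((addCompound (A t) k * mulCompound (Φ t) k) α β) t) ∧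
      mulCompound (Φ a) k = 1 :=
  ⟨fun t ht => hasDerivAt_mulCompound_apply (hΦ t ht) k,
    by rw [hΦa, mulCompound_one]⟩

/-- If `Φ` solves `Φ′(t) = A(t) Φ(t)`, `Φ(a) = I`, then its `k`-th multiplicative compound
solves `(d/dt) Φ^{(k)}(t) = A^{[k]}(t) Φ^{(k)}(t)` with `Φ^{(k)}(a) = I`. -/
theorem mulCompound_ode {n : ℕ} (a b : ℝ) (hab : a ≤ b)
    (A Φ : ℝ → Matrix (Fin n) (Fin n) ℝ)
    (hA : ∀ i j, ContinuousOn (fun t => A t i j) (Set.Icc a b))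
    (hΦ : ∀ t ∈ Set.Icc a b, ∀ i j, HasDerivAt (fun s => Φ s i j) ((A t * Φ t) i j) t)
    (hΦa : Φ a = 1)
    (k : ℕ) (hk1 : 1 ≤ k) (hk : k ≤ n) :
    (∀ t ∈ Set.Icc a b, ∀ α β, HasDerivAt (fun s => mulCompound (Φ s) k α β)
        ((addCompound (A t) k * mulCompound (Φ t) k) α β) t) ∧
      mulCompound (Φ a) k = 1 :=
  mulCompound_ode_general a b A Φ hΦ hΦa k
end

section
/- For A ∈ ℝ^{n×n}, the L∞-matrix measure of the k-additive compound satisfies μ_∞(A^{[k]}) = max over α ∈ Q(k,n) of [ Σ_{p=1}^k a_{α_p α_p} + Σ_{j ∉ α} ( |a_{α_1 j}| + ⋯ + |a_{α_k j}| ) ]. -/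
open Matrix

/-- The matrix measure induced by the `L∞` vector norm:
`μ∞(B) = max_i (b_{ii} + Σ_{j ≠ i} |b_{ij}|)`. -/
noncomputable def muInfty {ι : Type*} [Fintype ι] [DecidableEq ι] (B : Matrix ι ι ℝ) : ℝ :=
  ⨆ i, (B i i + ∑ j ∈ Finset.univ.erase i, |B i j|)

/-!
Differentiating the Leibniz expansion of the minor of `I + εA` on rows `α` and columns `β` at
`ε = 0` leaves one term `sign σ · a_{α_{σ q} β_q}` for each permutation `σ` and position `q` such
that `σ` matches `α` to `β` at every position other than `q`. Such a pair exists only if `β = α`,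
where it forces `σ = 1` and the entry is `Σ_p a_{α_p α_p}`, or if `β` arises from `α` by exchanging
a single index `α_p` for some `j ∉ α`, where the pair is unique and the entry is `±a_{α_p j}`.
Distinct pairs `(j, p)` give distinct exchanges, so the off-diagonal absolute row sum of row `α`
counts every `|a_{α_p j}|` with `j ∉ α` exactly once.
-/

open Finset Equiv Function

theorem hasDerivAt_det_add_smul {m 𝕜 : Type*} [Fintype m] [DecidableEq m]
    [NontriviallyNormedField 𝕜] (M N : Matrix m m 𝕜) :
    HasDerivAt (fun ε : 𝕜 => (M + ε • N).det)
      (∑ σ : Perm m, ((Perm.sign σ : ℤ) : 𝕜) *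
        ∑ q, (∏ p ∈ univ.erase q, M (σ p) p) * N (σ q) q) 0 := by
  simp only [det_apply', Matrix.add_apply, Matrix.smul_apply, smul_eq_mul]
  refine HasDerivAt.fun_sum fun σ _ => HasDerivAt.const_mul _ ?_
  simpa using HasDerivAt.fun_finsetProd (u := univ) fun p _ =>
    ((hasDerivAt_id (0 : 𝕜)).mul_const (N (σ p) p)).const_add (M (σ p) p)

theorem Equiv.Perm.eq_of_forall_ne_apply_eq {κ : Type*} {σ τ : Perm κ} {q : κ}
    (h : ∀ p ≠ q, σ p = τ p) : σ = τ := by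
  ext p
  rcases eq_or_ne p q with rfl | hp
  · obtain ⟨r, hr⟩ := τ.surjective (σ p)
    rcases eq_or_ne r p with rfl | hrp
    · exact hr.symm
    · exact absurd (σ.injective (hr ▸ h r hrp)) hrp
  · exact h p hp

section Exchange

variable {κ ι : Type*} [Fintype κ] [DecidableEq ι] {e f : κ → ι}

theorem image_eq_insert_erase_of_forall_ne (he : Injective e) {σ : Perm κ} {q : κ}
    (h : ∀ p ≠ q, e (σ p) = f p) :
    univ.image f = insert (f q) ((univ.image e).erase (e (σ q))) := by
  ext x
  simp only [mem_image, mem_univ, true_and, mem_insert, mem_erase]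
  constructor
  · rintro ⟨p, rfl⟩
    rcases eq_or_ne p q with rfl | hp
    · exact Or.inl rfl
    · exact Or.inr ⟨h p hp ▸ fun hpq => hp (σ.injective (he hpq)), σ p, h p hp⟩
  · rintro (rfl | ⟨hx, r, rfl⟩)
    · exact ⟨q, rfl⟩
    · refine ⟨σ.symm r, ?_⟩
      rw [← h _ fun hrq => hx (by rw [← hrq, apply_symm_apply]), apply_symm_apply]

theorem exists_perm_of_image_eq_insert_erase [DecidableEq κ] (he : Injective e)
    (hf : Injective f) {p q : κ}
    (h : univ.image f = insert (f q) ((univ.image e).erase (e p))) :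
    ∃ σ : Perm κ, σ q = p ∧ ∀ r ≠ q, e (σ r) = f r := by
  have hfr : ∀ r ≠ q, f r ∈ (univ.image e).erase (e p) := fun r hr =>
    (mem_insert.1 (h ▸ mem_image_of_mem f (mem_univ r))).resolve_left (hf.ne hr)
  set g := update f q (e p)
  have hg : ∀ r, ∃ s, e s = g r := by
    intro r
    rcases eq_or_ne r q with rfl | hr
    · exact ⟨p, by simp [g]⟩
    · obtain ⟨s, -, hs⟩ := mem_image.1 (mem_of_mem_erase (hfr r hr))
      exact ⟨s, by simp [g, hr, hs]⟩
  have hgq : ∀ r ≠ q, g r ≠ g q := fun r hr => by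
    simpa [g, hr] using ne_of_mem_erase (hfr r hr)
  have hginj : Injective g := by
    intro r r' hrr
    rcases eq_or_ne r q with rfl | hr
    · by_contra hne
      exact hgq r' (Ne.symm hne) hrr.symm
    rcases eq_or_ne r' q with rfl | hr'
    · exact absurd hrr (hgq r hr)
    · exact hf (by simpa [g, hr, hr'] using hrr)
  choose τ hτ using hg
  have hτinj : Injective τ := fun r r' hrr => hginj (by rw [← hτ, ← hτ, hrr])
  refine ⟨Equiv.ofBijective τ (Finite.injective_iff_bijective.1 hτinj), he ?_, fun r hr => ?_⟩
  · simp [hτ, g]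
  · simp [hτ, g, hr]

end Exchange

theorem Finset.eq_and_eq_of_insert_erase_eq {ι : Type*} [DecidableEq ι] {s : Finset ι}
    {a a' j j' : ι} (ha : a ∈ s) (hj : j ∉ s) (hj' : j' ∉ s)
    (h : insert j (s.erase a) = insert j' (s.erase a')) : j = j' ∧ a = a' := by
  have hjj : j = j' := by
    have := h ▸ mem_insert_self j (s.erase a)
    simp only [mem_insert, mem_erase] at this
    exact this.resolve_right fun hj'' => hj hj''.2
  subst hjj
  refine ⟨rfl, by_contra fun haa => ?_⟩
  have : a ∈ insert j (s.erase a') := by simp [haa, ha]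
  rw [← h] at this
  simp only [mem_insert, mem_erase, ne_eq, not_true_eq_false, false_and, or_false] at this
  exact hj (this ▸ ha)

section Compound

variable {𝕜 : Type*} [NontriviallyNormedField 𝕜] {n k : ℕ} (A : Matrix (Fin n) (Fin n) 𝕜)
  (α β : {s : Finset (Fin n) // s.card = k})

theorem addCompound_apply :
    addCompound A k α β =
      ∑ σ : Perm (Fin k), ∑ q,
        if ∀ p ≠ q, α.1.orderEmbOfFin α.2 (σ p) = β.1.orderEmbOfFin β.2 p then
          ((Perm.sign σ : ℤ) : 𝕜) * A (α.1.orderEmbOfFin α.2 (σ q)) (β.1.orderEmbOfFin β.2 q)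
        else 0 := by
  simp only [addCompound, mulCompound, submatrix_add, submatrix_smul]
  rw [(hasDerivAt_det_add_smul _ _).deriv]
  simp only [mul_sum]
  refine sum_congr rfl fun σ _ => sum_congr rfl fun q _ => ?_
  simp only [submatrix_apply, one_apply, prod_boole, mem_erase, mem_univ, and_true]
  split_ifs <;> ring

variable {α β} in
theorem eq_and_eq_one_or_exchange_of_forall_ne {σ : Perm (Fin k)} {q : Fin k}
    (h : ∀ p ≠ q, α.1.orderEmbOfFin α.2 (σ p) = β.1.orderEmbOfFin β.2 p) :
    (β = α ∧ σ = 1) ∨ (β.1.orderEmbOfFin β.2 q ∉ α.1 ∧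
      β.1 = insert (β.1.orderEmbOfFin β.2 q) (α.1.erase (α.1.orderEmbOfFin α.2 (σ q)))) := by
  have hβ := image_eq_insert_erase_of_forall_ne (α.1.orderEmbOfFin α.2).injective h
  simp only [image_orderEmbOfFin_univ] at hβ
  by_cases hq : β.1.orderEmbOfFin β.2 q ∈ α.1
  · have hβα : β = α := Subtype.ext <| eq_of_subset_of_card_le
      (hβ ▸ insert_subset hq (erase_subset _ _)) (by rw [α.2, β.2])
    subst hβα
    exact Or.inl ⟨rfl, Perm.eq_of_forall_ne_apply_eq fun p hp =>
      (β.1.orderEmbOfFin β.2).injective (h p hp)⟩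
  · exact Or.inr ⟨hq, hβ⟩

theorem addCompound_apply_self :
    addCompound A k α α = ∑ p, A (α.1.orderEmbOfFin α.2 p) (α.1.orderEmbOfFin α.2 p) := by
  rw [addCompound_apply, sum_eq_single 1 (fun σ _ hσ => ?_) (by simp)]
  · simp
  refine sum_eq_zero fun q _ => if_neg fun h => ?_
  rcases eq_and_eq_one_or_exchange_of_forall_ne h with ⟨-, h1⟩ | ⟨hq, -⟩
  · exact hσ h1
  · exact hq (orderEmbOfFin_mem _ _ _)

theorem addCompound_eq_zero (hβα : β ≠ α)
    (hβ : ∀ j ∉ α.1, ∀ p, β.1 ≠ insert j (α.1.erase (α.1.orderEmbOfFin α.2 p))) :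
    addCompound A k α β = 0 := by
  rw [addCompound_apply]
  refine sum_eq_zero fun σ _ => sum_eq_zero fun q _ => if_neg fun h => ?_
  rcases eq_and_eq_one_or_exchange_of_forall_ne h with ⟨h', -⟩ | ⟨hq, h'⟩
  · exact hβα h'
  · exact hβ _ hq _ h'

theorem norm_addCompound_of_eq_insert_erase {j : Fin n} (hj : j ∉ α.1) {p : Fin k}
    (hβ : β.1 = insert j (α.1.erase (α.1.orderEmbOfFin α.2 p))) :
    ‖addCompound A k α β‖ = ‖A (α.1.orderEmbOfFin α.2 p) j‖ := by
  set ea := α.1.orderEmbOfFin α.2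
  set eb := β.1.orderEmbOfFin β.2
  obtain ⟨q₀, -, hq₀⟩ : ∃ q ∈ univ, eb q = j := mem_image.1 <| by
    rw [image_orderEmbOfFin_univ, hβ]
    exact mem_insert_self _ _
  obtain ⟨σ₀, hσ₀q, hσ₀⟩ :=
    exists_perm_of_image_eq_insert_erase ea.injective eb.injective (p := p) (q := q₀)
      (by rw [image_orderEmbOfFin_univ, image_orderEmbOfFin_univ, hq₀, hβ])
  have huniq : ∀ σ q, (∀ r ≠ q, ea (σ r) = eb r) → σ = σ₀ ∧ q = q₀ := by
    intro σ q h
    rcases eq_and_eq_one_or_exchange_of_forall_ne h with ⟨rfl, -⟩ | ⟨hq, hβ'⟩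
    · exact absurd (hβ ▸ mem_insert_self j _) hj
    obtain ⟨hqj, -⟩ :=
      eq_and_eq_of_insert_erase_eq (orderEmbOfFin_mem _ _ _) hq hj (hβ'.symm.trans hβ)
    obtain rfl : q = q₀ := eb.injective (hqj.trans hq₀.symm)
    refine ⟨Perm.eq_of_forall_ne_apply_eq fun r (hr : r ≠ q) => ?_, rfl⟩
    exact ea.injective ((h r hr).trans (hσ₀ r hr).symm)
  have hsign : ‖((Perm.sign σ₀ : ℤ) : 𝕜)‖ = 1 := by
    rcases Int.units_eq_one_or (Perm.sign σ₀) with h | h <;> simp [h]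
  rw [addCompound_apply, sum_eq_single σ₀ (fun σ _ hσ => ?_) (by simp),
    sum_eq_single q₀ (fun q _ hq => if_neg fun h => hq (huniq σ₀ q h).2) (by simp),
    if_pos hσ₀, hσ₀q, hq₀, norm_mul, hsign, one_mul]
  exact sum_eq_zero fun q _ => if_neg fun h => hσ (huniq σ q h).1

theorem sum_norm_addCompound_erase :
    ∑ β ∈ univ.erase α, ‖addCompound A k α β‖ =
      ∑ j ∈ univ \ α.1, ∑ p, ‖A (α.1.orderEmbOfFin α.2 p) j‖ := by
  set ea := α.1.orderEmbOfFin α.2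
  have hmem : ∀ {x : Fin n × Fin k}, x ∈ (univ \ α.1) ×ˢ univ ↔ x.1 ∉ α.1 := by simp
  have hcard : ∀ x ∈ (univ \ α.1) ×ˢ univ, (insert x.1 (α.1.erase (ea x.2))).card = k := by
    intro x hx
    have hk : 0 < k := α.2 ▸ card_pos.2 ⟨_, orderEmbOfFin_mem α.1 α.2 x.2⟩
    rw [card_insert_of_notMem fun h => hmem.1 hx (mem_of_mem_erase h),
      card_erase_of_mem (orderEmbOfFin_mem _ _ _), α.2]
    omega
  rw [← sum_product']
  symm
  refine sum_bij_ne_zero (fun x hx _ => ⟨insert x.1 (α.1.erase (ea x.2)), hcard x hx⟩)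
    (fun x hx _ => ?_) (fun x hx _ y hy _ hxy => ?_) (fun β hβ hβ0 => ?_) (fun x hx _ => ?_)
  · refine mem_erase.2 ⟨fun h => hmem.1 hx ?_, mem_univ _⟩
    rw [← congrArg Subtype.val h]
    exact mem_insert_self _ _
  · obtain ⟨h₁, h₂⟩ := eq_and_eq_of_insert_erase_eq (orderEmbOfFin_mem _ _ _)
      (hmem.1 hx) (hmem.1 hy) (congrArg Subtype.val hxy)
    exact Prod.ext h₁ (ea.injective h₂)
  · by_contra hnot
    refine hβ0 (norm_eq_zero.2 (addCompound_eq_zero A α β (ne_of_mem_erase hβ) ?_))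
    intro j hj p hβj
    refine hnot ⟨(j, p), hmem.2 hj, ?_, Subtype.ext hβj.symm⟩
    rwa [← norm_addCompound_of_eq_insert_erase A α β hj hβj]
  · exact (norm_addCompound_of_eq_insert_erase A α _ (hmem.1 hx) rfl).symm

end Compound

theorem muInfty_addCompound_general {n : ℕ} (A : Matrix (Fin n) (Fin n) ℝ) (k : ℕ) :
    muInfty (addCompound A k) =
      ⨆ α : {s : Finset (Fin n) // s.card = k},
        (∑ p : Fin k, A (α.1.orderEmbOfFin α.2 p) (α.1.orderEmbOfFin α.2 p) +
          ∑ j ∈ Finset.univ \ α.1, ∑ p : Fin k, |A (α.1.orderEmbOfFin α.2 p) j|) := by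
  unfold muInfty
  refine iSup_congr fun α => ?_
  rw [addCompound_apply_self]
  simp only [← Real.norm_eq_abs, sum_norm_addCompound_erase]

/-- Explicit formula for `μ∞(A^{[k]})`. -/
theorem muInfty_addCompound {n : ℕ} (A : Matrix (Fin n) (Fin n) ℝ) (k : ℕ)
    (hk1 : 1 ≤ k) (hk : k ≤ n) :
    muInfty (addCompound A k) =
      ⨆ α : {s : Finset (Fin n) // s.card = k},
        (∑ p : Fin k, A (α.1.orderEmbOfFin α.2 p) (α.1.orderEmbOfFin α.2 p) +
          ∑ j ∈ Finset.univ \ α.1, ∑ p : Fin k, |A (α.1.orderEmbOfFin α.2 p) j|) :=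
  muInfty_addCompound_general A k
end

section
/- For a symmetric matrix S ∈ ℝ^{n×n}, the L2-matrix measure of the k-additive compound satisfies μ_2(A^{[k]}) = (1/2) Σ_{i=1}^k λ_i(A + A^T), the sum of the k largest eigenvalues of (A+A^T)/2. -/
open Matrix

/-!
Write `A + Aᵀ = U diag(λ) Uᵀ` with `U` orthogonal. By Cauchy–Binet, taking `k`-th multiplicative
compounds is multiplicative, so `U^(k)` is again orthogonal. Differentiating `(1 + ε B)^(k)` at
`ε = 0` (Jacobi's formula for the minors) shows that `B ↦ B^[k]` is linear, commutes with
transposition and with conjugation, and sends `diag(d)` to `diag(∑_{i ∈ s} d i)`. Hence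
`(A^[k] + A^[k]ᵀ)/2 = U^(k) diag(∑_{i ∈ s} λ i / 2) U^(k)ᵀ`, whose eigenvalues are the sums of `k`
eigenvalues of `(A + Aᵀ)/2`; the largest of them is the sum of the `k` largest.
-/

open Finset

namespace Finset

@[to_additive]
theorem prod_orderEmbOfFin {α M : Type*} [LinearOrder α] [CommMonoid M] {k : ℕ}
    (s : Finset α) (h : s.card = k) (f : α → M) :
    ∏ i, f (s.orderEmbOfFin h i) = ∏ x ∈ s, f x := by
  conv_rhs => rw [← image_orderEmbOfFin_univ s h]
  rw [prod_image fun _ _ _ _ hxy => (s.orderEmbOfFin h).injective hxy]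

theorem image_orderEmbOfFin_comp_perm {α : Type*} [LinearOrder α] {k : ℕ} (s : Finset α)
    (h : s.card = k) (τ : Equiv.Perm (Fin k)) : univ.image (s.orderEmbOfFin h ∘ τ) = s := by
  rw [← image_image, image_univ_equiv, image_orderEmbOfFin_univ]

end Finset

theorem Fin.val_le_orderEmbedding_apply {k n : ℕ} (e : Fin k ↪o Fin n) (j : Fin k) :
    (j : ℕ) ≤ e j := by
  calc (j : ℕ) = #(Iio j) := (Fin.card_Iio j).symm
    _ = #((Iio j).map e.toEmbedding) := (card_map _).symm
    _ ≤ #(Iio (e j)) := card_le_card fun x hx => by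
      obtain ⟨i, hi, rfl⟩ := mem_map.mp hx
      exact mem_Iio.mpr (e.strictMono (mem_Iio.mp hi))
    _ = e j := Fin.card_Iio _

theorem Fin.card_filter_val_lt_of_le {n k : ℕ} (hk : k ≤ n) :
    #(univ.filter fun i : Fin n => (i : ℕ) < k) = k := by
  rw [Fin.card_filter_val_lt, min_eq_right hk]

theorem exists_equiv_apply_eq_of_map_univ_eq {ι κ β : Type*} [Fintype ι] [Fintype κ]
    {f : ι → β} {g : κ → β} (h : univ.val.map f = univ.val.map g) :
    ∃ e : ι ≃ κ, ∀ i, g (e i) = f i := by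
  classical
  have hfiber : ∀ b, Fintype.card {i // f i = b} = Fintype.card {j // g j = b} := fun b => by
    simpa [Fintype.card_subtype, Multiset.count_map, eq_comm, Finset.card, Finset.filter_val]
      using congrArg (Multiset.count b) h
  exact ⟨Equiv.ofFiberEquiv fun b => Fintype.equivOfCardEq (hfiber b),
    Equiv.ofFiberEquiv_map _⟩

section SumOfLargest

variable {M : Type*} [AddCommMonoid M] [PartialOrder M] [IsOrderedAddMonoid M] {n k : ℕ}

theorem Antitone.sum_le_sum_filter_val_lt {lam : Fin n → M} (hlam : Antitone lam)
    {s : Finset (Fin n)} (hs : s.card = k) :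
    ∑ i ∈ s, lam i ≤ ∑ i ∈ univ.filter (fun i : Fin n => (i : ℕ) < k), lam i := by
  have hk : k ≤ n := hs ▸ (card_le_univ s).trans_eq (Fintype.card_fin n)
  set T := univ.filter fun i : Fin n => (i : ℕ) < k
  have hT : T.card = k := Fin.card_filter_val_lt_of_le hk
  have hTe : ⇑(T.orderEmbOfFin hT) = Fin.castLE hk :=
    (orderEmbOfFin_unique hT (fun j => by simp [T]) (Fin.strictMono_castLE hk)).symm
  rw [← sum_orderEmbOfFin s hs, ← sum_orderEmbOfFin T hT, hTe]
  exact sum_le_sum fun j _ => hlam (Fin.le_def.mpr (Fin.val_le_orderEmbedding_apply _ j))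

theorem isGreatest_range_sum_of_map_univ_eq {ι : Type*} [Fintype ι] {c : ι → M}
    {lam : Fin n → M} (hlam : Antitone lam) (h : univ.val.map c = univ.val.map lam)
    (hk : k ≤ n) :
    IsGreatest (Set.range fun s : {s : Finset ι // s.card = k} => ∑ i ∈ s.1, c i)
      (∑ i ∈ univ.filter (fun i : Fin n => (i : ℕ) < k), lam i) := by
  obtain ⟨e, he⟩ := exists_equiv_apply_eq_of_map_univ_eq h
  have hsum : ∀ s : Finset ι, ∑ i ∈ s, c i = ∑ i ∈ s.map e.toEmbedding, lam i := fun s => by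
    simp [he]
  refine ⟨⟨⟨(univ.filter fun i : Fin n => (i : ℕ) < k).map e.symm.toEmbedding, ?_⟩, ?_⟩, ?_⟩
  · rw [card_map, Fin.card_filter_val_lt_of_le hk]
  · simp [hsum, Finset.map_map]
  · rintro _ ⟨s, rfl⟩
    change ∑ i ∈ s.1, c i ≤ _
    rw [hsum]
    exact hlam.sum_le_sum_filter_val_lt (by rw [card_map, s.2])

end SumOfLargest

namespace Matrix

section CauchyBinet

variable {R : Type*} [CommRing R] {k : ℕ}

theorem det_mul_eq_sum_prod_mul_det_submatrix {m α : Type*} [Fintype m] [DecidableEq m]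
    [Fintype α] (A : Matrix m α R) (B : Matrix α m R) :
    det (A * B) = ∑ f : m → α, (∏ i, A i (f i)) * det (B.submatrix f id) := by
  let D : (m → R) [⋀^m]→ₗ[R] R := detRowAlternating
  have hrows : det (A * B) = D (fun i => ∑ j, A i j • B j) := by
    congr 1; ext i l; simp [mul_apply]
  rw [hrows, ← D.coe_multilinearMap, D.toMultilinearMap.map_sum]
  refine sum_congr rfl fun f _ => ?_
  rw [D.toMultilinearMap.map_smul_univ, smul_eq_mul]
  rfl

theorem det_submatrix_eq_sum_perm {α : Type*} (A : Matrix (Fin k) α R) (e : Fin k → α) :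
    det (A.submatrix id e) =
      ∑ τ : Equiv.Perm (Fin k), (Equiv.Perm.sign τ : R) * ∏ i, A i (e (τ i)) := by
  rw [det_apply']
  refine Fintype.sum_equiv (Equiv.inv _) _ _ fun τ => ?_
  rw [Equiv.inv_apply, Equiv.Perm.sign_inv]
  congr 1
  exact Fintype.prod_equiv τ _ _ fun i => by simp

variable {α : Type*} [LinearOrder α]

noncomputable def sigmaPermEquivInjective :
    (Σ _ : {s : Finset α // s.card = k}, Equiv.Perm (Fin k)) ≃
      {f : Fin k → α // Function.Injective f} :=
  Equiv.ofBijective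
    (fun p => ⟨p.1.1.orderEmbOfFin p.1.2 ∘ p.2,
      (p.1.1.orderEmbOfFin p.1.2).injective.comp p.2.injective⟩) <| by
  constructor
  · rintro ⟨⟨s₁, h₁⟩, τ₁⟩ ⟨⟨s₂, h₂⟩, τ₂⟩ heq
    have hf : s₁.orderEmbOfFin h₁ ∘ τ₁ = s₂.orderEmbOfFin h₂ ∘ τ₂ := congrArg Subtype.val heq
    obtain rfl : s₁ = s₂ := by
      rw [← image_orderEmbOfFin_comp_perm s₁ h₁ τ₁, hf, image_orderEmbOfFin_comp_perm]
    obtain rfl : τ₁ = τ₂ :=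
      Equiv.ext fun i => (s₁.orderEmbOfFin h₁).injective (congrFun hf i)
    rfl
  · rintro ⟨f, hf⟩
    set s := univ.image f
    have hs : s.card = k := by rw [card_image_of_injective _ hf, card_univ, Fintype.card_fin]
    let g : Fin k → Fin k := fun i =>
      (s.orderIsoOfFin hs).symm ⟨f i, mem_image_of_mem f (mem_univ i)⟩
    have hg : Function.Injective g := fun a b hab =>
      hf (congrArg Subtype.val ((s.orderIsoOfFin hs).symm.injective hab))
    refine ⟨⟨⟨s, hs⟩, Equiv.ofBijective g (Finite.injective_iff_bijective.mp hg)⟩, ?_⟩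
    ext i
    simp [g, ← coe_orderIsoOfFin_apply]

theorem det_mul_eq_sum_det_submatrix_mul_det_submatrix [Fintype α]
    (A : Matrix (Fin k) α R) (B : Matrix α (Fin k) R) :
    det (A * B) = ∑ s : {s : Finset α // s.card = k},
      det (A.submatrix id (s.1.orderEmbOfFin s.2)) *
        det (B.submatrix (s.1.orderEmbOfFin s.2) id) := by
  classical
  let F : (Fin k → α) → R := fun f => (∏ i, A i (f i)) * det (B.submatrix f id)
  have hF : ∀ f, ¬ Function.Injective f → F f = 0 := fun f hf => by
    obtain ⟨a, b, hab, hne⟩ : ∃ a b, f a = f b ∧ a ≠ b := by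
      simpa [Function.Injective] using hf
    simp only [F]
    rw [det_zero_of_row_eq hne (by funext j; simp [hab]), mul_zero]
  calc det (A * B) = ∑ f, F f := det_mul_eq_sum_prod_mul_det_submatrix A B
    _ = ∑ f : {f : Fin k → α // Function.Injective f}, F f := by
      rw [← Fintype.sum_subtype_add_sum_subtype Function.Injective F, add_eq_left]
      exact Fintype.sum_eq_zero _ fun f => hF f f.2
    _ = ∑ p, F (sigmaPermEquivInjective p).1 :=
      (Equiv.sum_comp sigmaPermEquivInjective (fun f => F f.1)).symm
    _ = _ := by
      rw [← univ_sigma_univ, sum_sigma]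
      refine sum_congr rfl fun s _ => ?_
      rw [det_submatrix_eq_sum_perm, sum_mul]
      refine sum_congr rfl fun τ _ => ?_
      change (∏ i, A i (s.1.orderEmbOfFin s.2 (τ i))) *
        det ((B.submatrix (s.1.orderEmbOfFin s.2) id).submatrix τ id) = _
      rw [det_permute]
      ring

end CauchyBinet

theorem hasDerivAt_det_add_smul {𝕜 : Type*} [NontriviallyNormedField 𝕜] {m : Type*} [Fintype m]
    [DecidableEq m] (N B : Matrix m m 𝕜) :
    HasDerivAt (fun ε : 𝕜 => det (N + ε • B)) (∑ i, det (N.updateRow i (B i))) 0 := by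
  let D : (m → 𝕜) [⋀^m]→L[𝕜] 𝕜 :=
    { (detRowAlternating : (m → 𝕜) [⋀^m]→ₗ[𝕜] 𝕜) with cont := continuous_id.matrix_det }
  have hline : HasDerivAt (fun ε : 𝕜 => of.symm N + ε • of.symm B) (of.symm B) 0 := by
    simpa using ((hasDerivAt_id (0 : 𝕜)).smul_const (of.symm B)).const_add (of.symm N)
  have h := (D.hasFDerivAt (of.symm N)).comp_hasDerivAt_of_eq 0 hline (by simp)
  simp only [ContinuousMultilinearMap.linearDeriv_apply] at h
  exact h

section mulCompound

variable {R : Type*} [CommRing R] {n m : ℕ}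

theorem mulCompound_mul {p : ℕ} (A : Matrix (Fin n) (Fin m) R) (B : Matrix (Fin m) (Fin p) R)
    (k : ℕ) : mulCompound (A * B) k = mulCompound A k * mulCompound B k := by
  ext s t
  rw [mulCompound, submatrix_mul A B _ id _ Function.bijective_id,
    det_mul_eq_sum_det_submatrix_mul_det_submatrix, mul_apply]
  rfl

theorem mulCompound_transpose (A : Matrix (Fin n) (Fin m) R) (k : ℕ) :
    mulCompound Aᵀ k = (mulCompound A k)ᵀ := by
  ext s t
  rw [mulCompound, ← transpose_submatrix, det_transpose]
  rfl

theorem mulCompound_conjTranspose [StarRing R] (A : Matrix (Fin n) (Fin m) R) (k : ℕ) :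
    mulCompound Aᴴ k = (mulCompound A k)ᴴ := by
  ext s t
  rw [mulCompound, ← conjTranspose_submatrix, det_conjTranspose]
  rfl

theorem mulCompound_diagonal (d : Fin n → R) (k : ℕ) :
    mulCompound (diagonal d) k = diagonal fun s => ∏ i ∈ s.1, d i := by
  ext s t
  obtain rfl | hst := eq_or_ne s t
  · rw [mulCompound, submatrix_diagonal _ _ (s.1.orderEmbOfFin s.2).injective, det_diagonal,
      diagonal_apply_eq]
    exact prod_orderEmbOfFin s.1 s.2 d
  · rw [diagonal_apply_ne _ hst]
    -- some element of `s` is missing from `t`, and its row in the minor vanishes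
    obtain ⟨x, hxs, hxt⟩ := not_subset.mp fun hsub =>
      hst (Subtype.ext (eq_of_subset_of_card_le hsub (by rw [s.2, t.2])))
    obtain ⟨i, -, rfl⟩ := mem_image.mp ((image_orderEmbOfFin_univ s.1 s.2).symm ▸ hxs)
    refine det_eq_zero_of_row_eq_zero i fun j => diagonal_apply_ne _ fun h => hxt ?_
    exact h ▸ orderEmbOfFin_mem t.1 t.2 j

theorem mulCompound_one (k : ℕ) : mulCompound (1 : Matrix (Fin n) (Fin n) R) k = 1 := by
  rw [← diagonal_one, mulCompound_diagonal]
  simp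

theorem mulCompound_mem_unitaryGroup [StarRing R] {U : Matrix (Fin n) (Fin n) R}
    (hU : U ∈ unitaryGroup (Fin n) R) (k : ℕ) : mulCompound U k ∈ unitaryGroup _ R := by
  rw [mem_unitaryGroup_iff, star_eq_conjTranspose, ← mulCompound_conjTranspose,
    ← mulCompound_mul, ← star_eq_conjTranspose, mem_unitaryGroup_iff.mp hU, mulCompound_one]

end mulCompound

section addCompound

variable {𝕜 : Type*} [NontriviallyNormedField 𝕜] {n : ℕ}

theorem addCompound_apply (A : Matrix (Fin n) (Fin n) 𝕜) (k : ℕ)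
    (s t : {s : Finset (Fin n) // s.card = k}) :
    addCompound A k s t =
      ∑ i, det (((1 : Matrix (Fin n) (Fin n) 𝕜).submatrix (s.1.orderEmbOfFin s.2)
        (t.1.orderEmbOfFin t.2)).updateRow i (A.submatrix (s.1.orderEmbOfFin s.2)
          (t.1.orderEmbOfFin t.2) i)) :=
  (hasDerivAt_det_add_smul _ _).deriv

theorem hasDerivAt_mulCompound_one_add_smul (A : Matrix (Fin n) (Fin n) 𝕜) (k : ℕ)
    (s t : {s : Finset (Fin n) // s.card = k}) :
    HasDerivAt (fun ε : 𝕜 => mulCompound (1 + ε • A) k s t) (addCompound A k s t) 0 :=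
  (hasDerivAt_det_add_smul _ _).differentiableAt.hasDerivAt

theorem addCompound_add (A B : Matrix (Fin n) (Fin n) 𝕜) (k : ℕ) :
    addCompound (A + B) k = addCompound A k + addCompound B k := by
  ext s t
  simp only [add_apply, addCompound_apply, ← sum_add_distrib, ← det_updateRow_add]
  rfl

theorem addCompound_smul (c : 𝕜) (A : Matrix (Fin n) (Fin n) 𝕜) (k : ℕ) :
    addCompound (c • A) k = c • addCompound A k := by
  ext s t
  simp only [smul_apply, addCompound_apply, smul_eq_mul, mul_sum, ← det_updateRow_smul]
  rfl

theorem addCompound_transpose (A : Matrix (Fin n) (Fin n) 𝕜) (k : ℕ) :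
    (addCompound A k)ᵀ = addCompound Aᵀ k := by
  ext s t
  change deriv (fun ε : 𝕜 => mulCompound (1 + ε • A) k t s) 0 =
    deriv (fun ε : 𝕜 => mulCompound (1 + ε • Aᵀ) k s t) 0
  congr 1
  funext ε
  rw [← transpose_one, ← transpose_smul, ← transpose_add, mulCompound_transpose, transpose_one]
  rfl

theorem hasDerivAt_prod_one_add_mul {ι : Type*} (s : Finset ι) (w : ι → 𝕜) :
    HasDerivAt (fun ε : 𝕜 => ∏ i ∈ s, (1 + ε * w i)) (∑ i ∈ s, w i) 0 := by
  classical
  simpa using HasDerivAt.fun_finsetProd (u := s) (f := fun i ε => 1 + ε * w i) (f' := w) (x := 0)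
    fun i _ => by simpa using ((hasDerivAt_id (0 : 𝕜)).mul_const (w i)).const_add 1

theorem addCompound_diagonal (d : Fin n → 𝕜) (k : ℕ) :
    addCompound (diagonal d) k = diagonal fun s => ∑ i ∈ s.1, d i := by
  ext s t
  have hcurve : ∀ ε : 𝕜, 1 + ε • diagonal d = diagonal fun i => 1 + ε * d i := fun ε => by
    rw [← diagonal_one, ← diagonal_smul, diagonal_add]
    rfl
  simp only [addCompound, hcurve, mulCompound_diagonal]
  obtain rfl | hst := eq_or_ne s t
  · simpa only [diagonal_apply_eq] using (hasDerivAt_prod_one_add_mul s.1 d).deriv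
  · simp only [diagonal_apply_ne _ hst, deriv_const]

theorem addCompound_conj (U M V : Matrix (Fin n) (Fin n) 𝕜) (hUV : U * V = 1) (k : ℕ) :
    addCompound (U * M * V) k = mulCompound U k * addCompound M k * mulCompound V k := by
  ext s t
  have hcurve : ∀ ε : 𝕜, 1 + ε • (U * M * V) = U * (1 + ε • M) * V := fun ε => by
    rw [Matrix.mul_add, Matrix.add_mul, Matrix.mul_one, hUV, Matrix.mul_smul, Matrix.smul_mul]
  conv_lhs => simp only [addCompound, hcurve, mulCompound_mul, mul_apply]
  exact HasDerivAt.deriv <| HasDerivAt.fun_sum fun j _ => HasDerivAt.mul_const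
    (HasDerivAt.fun_sum fun i _ => (hasDerivAt_mulCompound_one_add_smul M k i j).const_mul _) _

end addCompound

end Matrix

theorem muTwo_addCompound_general {n : ℕ} (A : Matrix (Fin n) (Fin n) ℝ) (k : ℕ)
    (hk : k ≤ n)
    (lam : Fin n → ℝ) (hmono : Antitone lam)
    (hlam : (A + Aᵀ).charpoly.roots = (Finset.univ.val : Multiset (Fin n)).map lam) :
    sSup (spectrum ℝ ((1 / 2 : ℝ) • (addCompound A k + (addCompound A k)ᵀ))) =
      (1 / 2) * ∑ i ∈ Finset.univ.filter (fun i : Fin n => (i : ℕ) < k), lam i := by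
  have hS : (A + Aᵀ).IsHermitian := by
    simp [IsHermitian, conjTranspose_eq_transpose_of_trivial, add_comm]
  have hU := hS.eigenvectorUnitary.2
  have hdiag : (1 / 2 : ℝ) • (A + Aᵀ) = (hS.eigenvectorUnitary : Matrix (Fin n) (Fin n) ℝ) *
      diagonal (fun i => 1 / 2 * hS.eigenvalues i) *
        star (hS.eigenvectorUnitary : Matrix (Fin n) (Fin n) ℝ) := by
    conv_lhs => rw [hS.spectral_theorem, Unitary.conjStarAlgAut_apply]
    rw [← Matrix.smul_mul, ← Matrix.mul_smul, ← diagonal_smul]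
    rfl
  have hvalues : univ.val.map (fun i => 1 / 2 * hS.eigenvalues i) =
      univ.val.map (fun i => 1 / 2 * lam i) := by
    have h : univ.val.map hS.eigenvalues = univ.val.map lam := by
      simpa [hlam] using hS.roots_charpoly_eq_eigenvalues.symm
    simpa only [Multiset.map_map, Function.comp_def] using congrArg (Multiset.map (1 / 2 * ·)) h
  rw [addCompound_transpose, ← addCompound_add, ← addCompound_smul, hdiag,
    addCompound_conj _ _ _ (mem_unitaryGroup_iff.mp hU), addCompound_diagonal,
    star_eq_conjTranspose, mulCompound_conjTranspose, ← star_eq_conjTranspose,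
    Unitary.spectrum_star_right_conjugate (U := ⟨_, mulCompound_mem_unitaryGroup hU k⟩),
    spectrum_diagonal, mul_sum]
  exact (isGreatest_range_sum_of_map_univ_eq (hmono.const_mul (by norm_num)) hvalues hk).csSup_eq

/-- `μ₂(A^{[k]}) = (1/2) Σ_{i=1}^k λ_i(A + Aᵀ)`: the `L₂` matrix measure of the `k`-additive
compound equals the sum of the `k` largest eigenvalues of `(A + Aᵀ)/2`. Here `μ₂(B)` is the
largest eigenvalue of `(B + Bᵀ)/2`, i.e. the supremum of its (real) spectrum, and
`lam : Fin n → ℝ` lists the eigenvalues of `A + Aᵀ` in decreasing order with multiplicity. -/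
theorem muTwo_addCompound {n : ℕ} (A : Matrix (Fin n) (Fin n) ℝ) (k : ℕ)
    (hk1 : 1 ≤ k) (hk : k ≤ n)
    (lam : Fin n → ℝ) (hmono : Antitone lam)
    (hlam : (A + Aᵀ).charpoly.roots = (Finset.univ.val : Multiset (Fin n)).map lam) :
    sSup (spectrum ℝ ((1 / 2 : ℝ) • (addCompound A k + (addCompound A k)ᵀ))) =
      (1 / 2) * ∑ i ∈ Finset.univ.filter (fun i : Fin n => (i : ℕ) < k), lam i :=
  muTwo_addCompound_general A k hk lam hmono hlam
end

section
/- Let A ∈ ℝ^{n×n} be nonsingular and k ∈ {1,…,n}. The following are equivalent: (i) for every x ∈ ℝ^n \ {0} with s^-(x) ≤ k−1, one has s^+(Ax) ≤ k−1; (ii) A is strictly sign-regular of order k, i.e., all k×k minors of A are positive, or all are negative. -/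
open Matrix

/-- Number of sign changes in a list of reals (consecutive pairs of opposite sign). -/
noncomputable def signChanges : List ℝ → ℕ
  | [] => 0
  | [_] => 0
  | a :: b :: rest => (if a * b < 0 then 1 else 0) + signChanges (b :: rest)

/-- `s⁻(x)`: the number of sign variations in `x` after deleting its zero entries
(`s⁻(0) = 0`). -/
noncomputable def sminus {n : ℕ} (x : Fin n → ℝ) : ℕ :=
  signChanges ((List.ofFn x).filter (fun a => a ≠ 0))

/-- `s⁺(x)`: the maximal possible number of sign variations in `x` after setting every zero
entry of `x` to either `+1` or `-1`. -/
noncomputable def splus {n : ℕ} (x : Fin n → ℝ) : ℕ :=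
  sSup { m | ∃ y : Fin n → ℝ, (∀ i, x i ≠ 0 → y i = x i) ∧
      (∀ i, x i = 0 → y i = 1 ∨ y i = -1) ∧ m = signChanges (List.ofFn y) }


/-!
(ii) ⇒ (i). If `s⁻(x) < k`, cutting the support of `x` into `k` consecutive blocks of constant
sign writes `x = T c` with `c ≠ 0` and `T ≥ 0` having `k` columns with consecutive supports. By
Cauchy–Binet all `k × k` minors of `A T` share the sign of those of `A`. If `s⁺(A T c) ≥ k`, some
`k + 1` entries `u_g` of `u = A T c` weakly alternate in sign; the Laplace expansion of the
singular matrix `[(A T)_g | u_g]` along its last column is then a sum of terms of one sign, which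
forces `u_g = 0` and hence `c = 0`.

(i) ⇒ (ii). A vanishing minor `A[r, c]` gives `x ≠ 0` supported on `c`, so `s⁻(x) < k`, with
`A x = 0` on the `k` rows `r`, so `s⁺(A x) ≥ k` (for `k = n`, `A x = 0` contradicts invertibility).
For `k + 1` columns `γ`, the kernel of `A[r, γ]` is spanned by `((-1)^j det A[r, γ ∖ γ_j])_j`; if
two consecutive minors had opposite signs, this vector would have `s⁻ < k`. Dually for `k + 1`
rows. Finally, any two `k`-subsets are joined by exchanges inside `(k + 1)`-subsets.
-/

open Finset
open scoped List

section Signs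

theorem SignType.sign_eq_sign_iff_mul_pos {a b : ℝ} (ha : a ≠ 0) (hb : b ≠ 0) :
    SignType.sign a = SignType.sign b ↔ 0 < a * b := by
  rcases ha.lt_or_gt with ha | ha <;> rcases hb.lt_or_gt with hb | hb
  · simp [sign_neg ha, sign_neg hb, mul_pos_of_neg_of_neg ha hb]
  · simp [sign_neg ha, sign_pos hb, (mul_neg_of_neg_of_pos ha hb).le]
  · simp [sign_pos ha, sign_neg hb, (mul_neg_of_pos_of_neg ha hb).le]
  · simp [sign_pos ha, sign_pos hb, mul_pos ha hb]

theorem mul_neg_of_sign_ne {a b : ℝ} (ha : a ≠ 0) (hb : b ≠ 0)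
    (h : SignType.sign a ≠ SignType.sign b) : a * b < 0 :=
  lt_of_le_of_ne (not_lt.mp (mt (SignType.sign_eq_sign_iff_mul_pos ha hb).mpr h))
    (mul_ne_zero ha hb)

theorem exists_sign_mul_nonneg (a : ℝ) : ∃ ε : ℝ, (ε = 1 ∨ ε = -1) ∧ 0 ≤ ε * a := by
  rcases le_total 0 a with h | h
  · exact ⟨1, Or.inl rfl, by simpa using h⟩
  · exact ⟨-1, Or.inr rfl, by simpa using h⟩

theorem mul_neg_of_alternating {ε a b : ℝ} (m : ℕ) (ha : 0 < ε * (-1) ^ m * a)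
    (hb : 0 < ε * (-1) ^ (m + 1) * b) : a * b < 0 := by
  set p := ε * (-1) ^ m
  have key : 0 < -(p ^ 2 * (a * b)) := by
    rw [pow_succ, ← mul_assoc, mul_neg_one] at hb
    linarith [mul_pos ha hb]
  nlinarith [sq_nonneg p]

variable {k : ℕ}

theorem ne_zero_of_alternating (hk : 0 < k) {w : Fin (k + 1) → ℝ}
    (hw : ∀ j : Fin k, w j.castSucc * w j.succ < 0) (j : Fin (k + 1)) : w j ≠ 0 := by
  cases j using Fin.lastCases with
  | last =>
    have : (⟨k - 1, by omega⟩ : Fin k).succ = Fin.last k := Fin.ext (by simp; omega)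
    exact this ▸ right_ne_zero_of_mul (hw ⟨k - 1, by omega⟩).ne
  | cast j => exact left_ne_zero_of_mul (hw j).ne

theorem exists_sign_mul_pos_of_alternating (hk : 0 < k) {w : Fin (k + 1) → ℝ}
    (hw : ∀ j : Fin k, w j.castSucc * w j.succ < 0) :
    ∃ ε : ℝ, (ε = 1 ∨ ε = -1) ∧ ∀ j : Fin (k + 1), 0 < ε * (-1) ^ (j : ℕ) * w j := by
  have hw0 : w 0 ≠ 0 := left_ne_zero_of_mul (hw ⟨0, hk⟩).ne
  refine ⟨if 0 < w 0 then 1 else -1, by split_ifs <;> simp, fun j => ?_⟩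
  induction j using Fin.induction with
  | zero =>
    split_ifs with h
    · simpa using h
    · simpa using lt_of_le_of_ne (not_lt.mp h) hw0
  | succ j ih =>
    set p := (if 0 < w 0 then (1 : ℝ) else -1) * (-1) ^ (j : ℕ)
    have key : 0 < -(p * w j.succ) * w j.castSucc ^ 2 := by
      rw [Fin.val_castSucc] at ih
      linarith [mul_pos ih (neg_pos.mpr (hw j))]
    rw [Fin.val_succ, pow_succ]
    nlinarith [sq_nonneg (w j.castSucc)]

theorem Fin.apply_eq_apply_of_castSucc_eq_succ {α : Type*} {f : Fin (k + 1) → α}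
    (h : ∀ q : Fin k, f q.castSucc = f q.succ) (i j : Fin (k + 1)) : f i = f j := by
  have : ∀ i, f i = f 0 := fun i => by
    induction i using Fin.induction with
    | zero => rfl
    | succ i ih => rw [← h, ih]
  rw [this i, this j]

theorem exists_le_eq_of_step_le_one {β : ℕ → ℕ} (hstep : ∀ i, β (i + 1) ≤ β i + 1) {j : ℕ}
    (h₀ : β 0 ≤ j) {N : ℕ} (hN : j ≤ β N) : ∃ i ≤ N, β i = j := by
  induction N with
  | zero => exact ⟨0, le_rfl, le_antisymm h₀ hN⟩
  | succ N ih =>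
    by_cases h : j ≤ β N
    · obtain ⟨i, hi, hij⟩ := ih h
      exact ⟨i, hi.trans N.le_succ, hij⟩
    · exact ⟨N + 1, le_rfl, by have := hstep N; omega⟩

theorem sign_eq_of_monotone_of_eq {β : ℕ → ℕ} (hβ : Monotone β) {v : ℕ → ℝ} {N : ℕ}
    (hadj : ∀ i < N, β (i + 1) = β i → SignType.sign (v i) = SignType.sign (v (i + 1)))
    {i i' : ℕ} (hii' : i ≤ i') (hi' : i' ≤ N) (h : β i = β i') :
    SignType.sign (v i) = SignType.sign (v i') := by
  revert hi' h
  induction i', hii' using Nat.le_induction with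
  | base => exact fun _ _ => rfl
  | succ i' hii' ih =>
    intro hi' h
    have h₁ := hβ hii'
    have h₂ := hβ (Nat.le_add_right i' 1)
    rw [ih (by omega) (by omega)]
    exact hadj i' (by omega) (by omega)

end Signs

section Extend

theorem Function.extend_zero_ne_zero {α β M : Type*} [Zero M] {γ : α → β}
    (hγ : Function.Injective γ) {z : α → M} (hz : z ≠ 0) : Function.extend γ z 0 ≠ 0 := by
  obtain ⟨j, hj⟩ := Function.ne_iff.mp hz
  exact Function.ne_iff.mpr ⟨γ j, by simpa [hγ.extend_apply] using hj⟩

theorem Function.mem_range_of_extend_zero_ne_zero {α β M : Type*} [Zero M] {γ : α → β}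
    {z : α → M} {l : β} (h : Function.extend γ z 0 l ≠ 0) : l ∈ Set.range γ := by
  by_contra hl
  exact h (by simp [Function.extend_apply' _ _ _ hl])

variable {R : Type*} [NonUnitalNonAssocSemiring R]

theorem Matrix.mulVec_extend_zero {ι κ μ : Type*} [Fintype κ] [Fintype μ] (M : Matrix ι κ R)
    {γ : μ → κ} (hγ : Function.Injective γ) (z : μ → R) :
    M *ᵥ Function.extend γ z 0 = M.submatrix id γ *ᵥ z := by
  classical
  ext i
  simp only [mulVec, dotProduct, submatrix_apply, id]
  rw [← sum_subset (subset_univ (univ.image γ)) fun l _ hl => ?_, sum_image fun a _ b _ h => hγ h]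
  · simp [hγ.extend_apply]
  · rw [Function.extend_apply' _ _ _ fun ⟨j, hj⟩ => hl (mem_image.mpr ⟨j, mem_univ _, hj⟩)]
    simp

theorem Matrix.of_extend_mulVec {ι κ μ : Type*} [Fintype κ] (Q : Matrix μ κ R) {e : μ → ι}
    (he : Function.Injective e) (c : κ → R) :
    (Matrix.of fun l j => Function.extend e (fun i => Q i j) 0 l) *ᵥ c =
      Function.extend e (Q *ᵥ c) 0 := by
  ext l
  by_cases hl : ∃ i, e i = l
  · obtain ⟨i, rfl⟩ := hl
    simp [mulVec, dotProduct, he.extend_apply]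
  · simp [mulVec, dotProduct, Function.extend_apply' _ _ _ hl]

end Extend

section Subsets

theorem Finset.exists_orderEmbOfFin_eq_comp_succAbove {α : Type*} [LinearOrder α] {k : ℕ}
    {Γ s : Finset α} (hΓ : Γ.card = k + 1) (hs : s.card = k) (h : s ⊆ Γ) :
    ∃ j : Fin (k + 1), ⇑(s.orderEmbOfFin hs) = Γ.orderEmbOfFin hΓ ∘ j.succAbove := by
  obtain ⟨b, hbΓ, hbs⟩ := exists_mem_notMem_of_card_lt_card (s := s) (t := Γ) (by omega)
  obtain ⟨j, rfl⟩ : b ∈ Set.range (Γ.orderEmbOfFin hΓ) := by simpa using hbΓ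
  have hΓs : insert (Γ.orderEmbOfFin hΓ j) s = Γ :=
    eq_of_subset_of_card_le (insert_subset hbΓ h) (by rw [card_insert_of_notMem hbs, hs, hΓ])
  refine ⟨j, (orderEmbOfFin_unique hs (fun q => ?_)
    ((Γ.orderEmbOfFin hΓ).strictMono.comp (Fin.strictMono_succAbove j))).symm⟩
  have hq : Γ.orderEmbOfFin hΓ (j.succAbove q) ∈ insert (Γ.orderEmbOfFin hΓ j) s := by
    rw [hΓs]
    exact orderEmbOfFin_mem Γ hΓ _
  exact (mem_insert.mp hq).resolve_left fun h' =>
    Fin.succAbove_ne j q ((Γ.orderEmbOfFin hΓ).injective h')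

theorem Finset.apply_eq_of_forall_subset_card_add_one {α β : Type*} [DecidableEq α] {k : ℕ}
    (f : {s : Finset α // s.card = k} → β)
    (hf : ∀ (Γ : Finset α) (s t : {s : Finset α // s.card = k}), Γ.card = k + 1 → s.1 ⊆ Γ →
      t.1 ⊆ Γ → f s = f t) (s t : {s : Finset α // s.card = k}) : f s = f t := by
  obtain ⟨s, hs⟩ := s
  obtain ⟨t, ht⟩ := t
  induction hd : (s \ t).card generalizing s with
  | zero =>
    obtain rfl : s = t :=
      eq_of_subset_of_card_le (sdiff_eq_empty_iff_subset.mp (card_eq_zero.mp hd)) (by rw [hs, ht])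
    rfl
  | succ d ih =>
    obtain ⟨a, ha⟩ : (s \ t).Nonempty := card_pos.mp (by omega)
    obtain ⟨b, hb⟩ : (t \ s).Nonempty :=
      card_pos.mp (by rw [← card_sdiff_comm (hs.trans ht.symm)]; omega)
    rw [mem_sdiff] at ha hb
    have hk : 0 < k := hs ▸ card_pos.mpr ⟨a, ha.1⟩
    have hs' : (insert b (s.erase a)).card = k := by
      rw [card_insert_of_notMem fun h => hb.2 (mem_of_mem_erase h), card_erase_of_mem ha.1, hs]
      omega
    rw [hf (insert b s) ⟨s, hs⟩ ⟨_, hs'⟩ (by rw [card_insert_of_notMem hb.2, hs])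
      (subset_insert _ _) (insert_subset_insert _ (erase_subset _ _))]
    refine ih _ hs' ?_
    have : insert b (s.erase a) \ t = (s \ t).erase a := by
      ext y
      simp only [mem_sdiff, mem_insert, mem_erase]
      constructor
      · rintro ⟨rfl | h, h'⟩
        · exact absurd hb.1 h'
        · exact ⟨h.1, h.2, h'⟩
      · rintro ⟨h₁, h₂, h₃⟩
        exact ⟨Or.inr ⟨h₁, h₂⟩, h₃⟩
    rw [this, card_erase_of_mem (mem_sdiff.mpr ha), hd]
    rfl

end Subsets

section Determinants

theorem Matrix.det_mul_eq_sum_prod_mul_det {R m n : Type*} [CommRing R] [Fintype m]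
    [DecidableEq m] [Fintype n] (B : Matrix m n R) (T : Matrix n m R) :
    (B * T).det = ∑ p : m → n, (∏ j, T (p j) j) * (B.submatrix id p).det := by
  simp only [det_apply', mul_apply, prod_univ_sum, mul_sum, Fintype.piFinset_univ]
  rw [sum_comm]
  refine sum_congr rfl fun p _ => ?_
  refine sum_congr rfl fun σ _ => ?_
  simp only [submatrix_apply, id, prod_mul_distrib]
  ring

theorem det_submatrix_eq_mulCompound {m n k : ℕ} (A : Matrix (Fin m) (Fin n) ℝ)
    {r : Fin k → Fin m} {c : Fin k → Fin n} (hr : StrictMono r) (hc : StrictMono c) :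
    (A.submatrix r c).det =
      mulCompound A k ⟨univ.image r, by simp [card_image_of_injective _ hr.injective]⟩
        ⟨univ.image c, by simp [card_image_of_injective _ hc.injective]⟩ := by
  rw [mulCompound, ← orderEmbOfFin_unique _ (fun i => mem_image_of_mem r (mem_univ i)) hr,
    ← orderEmbOfFin_unique _ (fun i => mem_image_of_mem c (mem_univ i)) hc]

variable {R : Type*} [CommRing R] {k : ℕ}

-- the generalized cross product of the columns of `B`
def alternatingMinors (B : Matrix (Fin (k + 1)) (Fin k) R) : Fin (k + 1) → R :=
  fun i => (-1) ^ (i : ℕ) * (B.submatrix i.succAbove id).det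

theorem vecMul_alternatingMinors (B : Matrix (Fin (k + 1)) (Fin k) R) :
    alternatingMinors B ᵥ* B = 0 := by
  ext q
  let M : Matrix (Fin (k + 1)) (Fin (k + 1)) R := Matrix.of fun i => Fin.cons (B i q) (B i)
  have hM : ∀ i : Fin (k + 1), M.submatrix i.succAbove Fin.succ = B.submatrix i.succAbove id :=
    fun i => by ext; simp [M]
  have h0 : M.det = 0 := det_zero_of_column_eq (Fin.succ_ne_zero q).symm fun i => by simp [M]
  rw [det_succ_column_zero] at h0
  simpa [vecMul, dotProduct, alternatingMinors, hM, M, mul_right_comm] using h0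

theorem exists_mulVec_eq_of_alternatingMinors_dotProduct_eq_zero {K : Type*} [Field K]
    {B : Matrix (Fin (k + 1)) (Fin k) K} (hB : (B.submatrix Fin.succ id).det ≠ 0)
    {u : Fin (k + 1) → K} (hu : alternatingMinors B ⬝ᵥ u = 0) : ∃ c, B *ᵥ c = u := by
  set c := (B.submatrix Fin.succ id)⁻¹ *ᵥ (u ∘ Fin.succ)
  have hsucc : ∀ i : Fin k, (B *ᵥ c - u) i.succ = 0 := fun i => by
    have : B.submatrix Fin.succ id *ᵥ c = u ∘ Fin.succ := by
      rw [mulVec_mulVec, mul_nonsing_inv _ (isUnit_iff_ne_zero.mpr hB), one_mulVec]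
    exact sub_eq_zero.mpr (congrFun this i)
  have hw : alternatingMinors B ⬝ᵥ (B *ᵥ c - u) = 0 := by
    rw [dotProduct_sub, dotProduct_mulVec, vecMul_alternatingMinors, zero_dotProduct, hu, sub_zero]
  have h0 : (B *ᵥ c - u) 0 = 0 := by
    rw [dotProduct, Fin.sum_univ_succ] at hw
    simp only [hsucc, mul_zero, sum_const_zero, add_zero] at hw
    refine (mul_eq_zero.mp hw).resolve_left ?_
    simpa [alternatingMinors] using hB
  exact ⟨c, sub_eq_zero.mp (funext fun i => Fin.cases h0 hsucc i)⟩

end Determinants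

section SignChanges

theorem signChanges_le_length (l : List ℝ) : signChanges l ≤ l.length := by
  induction l with
  | nil => simp [signChanges]
  | cons a l ih =>
    cases l with
    | nil => simp [signChanges]
    | cons b l => simp only [signChanges, List.length_cons] at ih ⊢; split_ifs <;> omega

theorem signChanges_zero_cons (l : List ℝ) : signChanges (0 :: l) = signChanges l := by
  cases l <;> simp [signChanges]

theorem signChanges_cons_le_cons_cons (a : ℝ) {b : ℝ} (hb : b ≠ 0) (l : List ℝ) :
    signChanges (a :: l) ≤ signChanges (a :: b :: l) := by
  cases l with
  | nil => exact Nat.zero_le _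
  | cons c l =>
    simp only [signChanges]
    have : a * c < 0 → a * b < 0 ∨ b * c < 0 := by
      intro hac
      by_contra! h
      have hb2 : 0 < b ^ 2 := by positivity
      nlinarith [mul_nonneg h.1 h.2, mul_pos hb2 (neg_pos.mpr hac)]
    split_ifs with h1 h2 h3 <;> first | omega | (rcases this h1 with h | h <;> contradiction)

theorem signChanges_cons_le_cons_of_sublist {l₁ l₂ : List ℝ} (h : l₁ <+ l₂)
    (h₀ : ∀ b ∈ l₂, b ≠ 0) (a : ℝ) : signChanges (a :: l₁) ≤ signChanges (a :: l₂) := by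
  induction h generalizing a with
  | slnil => rfl
  | cons b _ ih =>
    exact (ih (fun c hc => h₀ c (.tail _ hc)) a).trans
      (signChanges_cons_le_cons_cons a (h₀ b (.head _)) _)
  | cons_cons b _ ih =>
    simp only [signChanges]
    have := ih (fun c hc => h₀ c (.tail _ hc)) b
    omega

theorem signChanges_le_of_sublist {l₁ l₂ : List ℝ} (h : l₁ <+ l₂) (h₀ : ∀ b ∈ l₂, b ≠ 0) :
    signChanges l₁ ≤ signChanges l₂ := by
  simpa only [signChanges_zero_cons] using signChanges_cons_le_cons_of_sublist h h₀ 0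

theorem signChanges_of_isChain {l : List ℝ} (h : l.IsChain (fun a b : ℝ => a * b < 0)) :
    signChanges l = l.length - 1 := by
  induction l with
  | nil => rfl
  | cons a l ih =>
    cases l with
    | nil => rfl
    | cons b l =>
      rw [List.isChain_cons_cons] at h
      simp only [signChanges, if_pos h.1, ih h.2, List.length_cons]
      omega

theorem signChanges_eq_sum (l : List ℝ) :
    signChanges l = ∑ m ∈ range (l.length - 1),
      if l.getD m 0 * l.getD (m + 1) 0 < 0 then 1 else 0 := by
  induction l with
  | nil => rfl
  | cons a l ih =>
    cases l with
    | nil => rfl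
    | cons b l =>
      rw [signChanges, ih]
      simp only [List.length_cons, Nat.add_sub_cancel, sum_range_succ' _ (l.length),
        List.getD_cons_succ, List.getD_cons_zero]
      omega

theorem exists_isChain_sublist_cons (a : ℝ) (l : List ℝ) (h₀ : ∀ b ∈ a :: l, b ≠ 0) :
    ∃ l', l' <+ l ∧ (a :: l').IsChain (fun a b : ℝ => a * b < 0) ∧
      l'.length = signChanges (a :: l) := by
  induction l generalizing a with
  | nil => exact ⟨[], .slnil, .singleton a, rfl⟩
  | cons b l ih =>
    obtain ⟨l', hsub, hchain, hlen⟩ := ih b fun c hc => h₀ c (.tail _ hc)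
    by_cases hab : a * b < 0
    · refine ⟨b :: l', hsub.cons_cons b, List.isChain_cons_cons.mpr ⟨hab, hchain⟩, ?_⟩
      simp [signChanges, hab, hlen, add_comm]
    · refine ⟨l', hsub.cons b, ?_, by simp [signChanges, hab, hlen]⟩
      cases l' with
      | nil => exact .singleton a
      | cons c l' =>
        rw [List.isChain_cons_cons] at hchain ⊢
        refine ⟨?_, hchain.2⟩
        have ha := h₀ a (.head _)
        have hb := h₀ b (.tail _ (.head _))
        have hab' : 0 < a * b := lt_of_le_of_ne (not_lt.mp hab) (mul_ne_zero ha hb).symm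
        have hb2 : 0 < b ^ 2 := by positivity
        nlinarith [mul_pos hab' (neg_pos.mpr hchain.1), mul_pos hb2 hab']

theorem exists_isChain_sublist {l : List ℝ} (h₀ : ∀ b ∈ l, b ≠ 0) {k : ℕ} (hk : 0 < k)
    (hl : k ≤ signChanges l) :
    ∃ l', l' <+ l ∧ l'.IsChain (fun a b : ℝ => a * b < 0) ∧ l'.length = k + 1 := by
  cases l with
  | nil => simp [signChanges] at hl; omega
  | cons a l =>
    obtain ⟨l', hsub, hchain, hlen⟩ := exists_isChain_sublist_cons a l h₀
    refine ⟨(a :: l').take (k + 1), (List.take_sublist _ _).trans (hsub.cons_cons a),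
      hchain.take _, ?_⟩
    simp only [List.length_take, List.length_cons]
    omega

end SignChanges

section Variations

variable {n k : ℕ}

theorem exists_strictMono_of_isChain_sublist_ofFn {x : Fin n → ℝ} {l : List ℝ}
    (hl : l <+ List.ofFn x) (hlen : l.length = k + 1) (hc : l.IsChain (fun a b : ℝ => a * b < 0)) :
    ∃ g : Fin (k + 1) → Fin n, StrictMono g ∧ ∀ j : Fin k, x (g j.castSucc) * x (g j.succ) < 0 := by
  obtain ⟨f, hf⟩ := List.sublist_iff_exists_fin_orderEmbedding_get_eq.mp hl
  have hx : ∀ j : Fin (k + 1), x (Fin.cast (List.length_ofFn) (f (Fin.cast hlen.symm j))) =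
      l[(j : ℕ)] := fun j => by
    have := (hf (Fin.cast hlen.symm j)).symm
    simp only [List.get_eq_getElem, List.getElem_ofFn, Fin.val_cast] at this
    exact this
  refine ⟨fun j => Fin.cast List.length_ofFn (f (Fin.cast hlen.symm j)), fun a b hab => ?_,
    fun j => ?_⟩
  · have := f.strictMono (show Fin.cast hlen.symm a < Fin.cast hlen.symm b from hab)
    simp only [Fin.lt_def, Fin.val_cast] at this ⊢
    exact this
  · rw [hx, hx]
    exact List.isChain_iff_getElem.mp hc j (by simp [hlen])

theorem sminus_eq_signChanges_ofFn {n : ℕ} (x : Fin n → ℝ) :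
    sminus x = signChanges (List.ofFn
      (x ∘ (univ.filter fun l => x l ≠ 0).orderEmbOfFin rfl)) := by
  set S := univ.filter fun l => x l ≠ 0
  have hsort : S.sort (· ≤ ·) = (List.finRange n).filter fun l => x l ≠ 0 := by
    have : ((List.finRange n).filter fun l => x l ≠ 0).toFinset = S := by ext; simp [S]
    rw [← this]
    exact (List.toFinset_sort _ ((List.nodup_finRange n).filter _)).mpr
      ((List.pairwise_le_finRange n).filter _)
  rw [sminus, List.ofFn_eq_map, List.filter_map, List.ofFn_eq_map, ← List.map_map,
    listMap_orderEmbOfFin_finRange, hsort]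
  rfl

theorem exists_alternating_of_le_sminus {x : Fin n → ℝ} (hk : 0 < k) (h : k ≤ sminus x) :
    ∃ g : Fin (k + 1) → Fin n, StrictMono g ∧ ∀ j : Fin k, x (g j.castSucc) * x (g j.succ) < 0 := by
  obtain ⟨l, hl, hc, hlen⟩ :=
    exists_isChain_sublist (fun b hb => by simpa using (List.mem_filter.mp hb).2) hk h
  exact exists_strictMono_of_isChain_sublist_ofFn (hl.trans List.filter_sublist) hlen hc

theorem sminus_lt_of_support_subset_range (hk : 0 < k) (f : Fin k → Fin n)
    (h : ∀ l, x l ≠ 0 → l ∈ Set.range f) : sminus x < k := by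
  classical
  by_contra! hle
  obtain ⟨g, hg, halt⟩ := exists_alternating_of_le_sminus hk hle
  have hsub : univ.image g ⊆ univ.image f := fun l hl => by
    obtain ⟨j, -, rfl⟩ := mem_image.mp hl
    obtain ⟨i, hi⟩ := h (g j) (ne_zero_of_alternating (w := x ∘ g) hk halt j)
    exact mem_image.mpr ⟨i, mem_univ _, hi⟩
  have := (card_le_card hsub).trans card_image_le
  rw [card_image_of_injective _ hg.injective] at this
  simp at this

theorem sminus_lt_of_support_subset_range_of_mul_nonneg {γ : Fin (k + 1) → Fin n}
    (hγ : StrictMono γ) (h : ∀ l, x l ≠ 0 → l ∈ Set.range γ) (m : Fin k)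
    (hm : 0 ≤ x (γ m.castSucc) * x (γ m.succ)) : sminus x < k := by
  classical
  have hk : 0 < k := m.pos
  by_contra! hle
  obtain ⟨g, hg, halt⟩ := exists_alternating_of_le_sminus hk hle
  have hcard : (univ.image γ).card = k + 1 := by simp [card_image_of_injective _ hγ.injective]
  have hgγ : g = γ := by
    refine (orderEmbOfFin_unique hcard (fun j => ?_) hg).trans
      (orderEmbOfFin_unique hcard (fun j => mem_image_of_mem γ (mem_univ j)) hγ).symm
    obtain ⟨i, hi⟩ := h (g j) (ne_zero_of_alternating (w := x ∘ g) hk halt j)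
    exact mem_image.mpr ⟨i, mem_univ _, hi⟩
  exact (hgγ ▸ halt m).not_ge hm

theorem bddAbove_splus_set (u : Fin n → ℝ) : BddAbove {m | ∃ y : Fin n → ℝ,
    (∀ i, u i ≠ 0 → y i = u i) ∧ (∀ i, u i = 0 → y i = 1 ∨ y i = -1) ∧
      m = signChanges (List.ofFn y)} :=
  ⟨n, by rintro _ ⟨y, -, -, rfl⟩; simpa using signChanges_le_length (List.ofFn y)⟩

theorem signChanges_le_splus {u y : Fin n → ℝ} (h₁ : ∀ i, u i ≠ 0 → y i = u i)
    (h₂ : ∀ i, u i = 0 → y i = 1 ∨ y i = -1) : signChanges (List.ofFn y) ≤ splus u :=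
  le_csSup (bddAbove_splus_set u) ⟨y, h₁, h₂, rfl⟩

theorem exists_signChanges_eq_splus (u : Fin n → ℝ) : ∃ y : Fin n → ℝ, (∀ i, y i ≠ 0) ∧
    (∀ i, u i ≠ 0 → y i = u i) ∧ signChanges (List.ofFn y) = splus u := by
  have hne : Set.Nonempty {m | ∃ y : Fin n → ℝ, (∀ i, u i ≠ 0 → y i = u i) ∧
      (∀ i, u i = 0 → y i = 1 ∨ y i = -1) ∧ m = signChanges (List.ofFn y)} :=
    ⟨_, fun i => if u i = 0 then 1 else u i, fun i hi => by simp [hi], fun i hi => by simp [hi],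
      rfl⟩
  obtain ⟨y, h₁, h₂, hy⟩ := Nat.sSup_mem hne (bddAbove_splus_set u)
  refine ⟨y, fun i => ?_, h₁, hy.symm⟩
  by_cases hi : u i = 0
  · rcases h₂ i hi with h | h <;> simp [h]
  · rw [h₁ i hi]; exact hi

theorem exists_alternating_of_le_splus {u : Fin n → ℝ} (hk : 0 < k) (h : k ≤ splus u) :
    ∃ g : Fin (k + 1) → Fin n, StrictMono g ∧
      ∃ ε : ℝ, (ε = 1 ∨ ε = -1) ∧ ∀ j : Fin (k + 1), 0 ≤ ε * (-1) ^ (j : ℕ) * u (g j) := by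
  obtain ⟨y, hy₀, hyu, hy⟩ := exists_signChanges_eq_splus u
  obtain ⟨l, hl, hc, hlen⟩ := exists_isChain_sublist (l := List.ofFn y)
    (by simpa [List.mem_ofFn] using hy₀) hk (hy ▸ h)
  obtain ⟨g, hg, halt⟩ := exists_strictMono_of_isChain_sublist_ofFn hl hlen hc
  obtain ⟨ε, hε, hpos⟩ := exists_sign_mul_pos_of_alternating (w := y ∘ g) hk halt
  refine ⟨g, hg, ε, hε, fun j => ?_⟩
  by_cases hj : u (g j) = 0
  · simp [hj]
  · exact hyu _ hj ▸ (hpos j).le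

theorem le_signChanges_ofFn_of_alternating {y : Fin n → ℝ} (hy : ∀ i, y i ≠ 0)
    {g : Fin (k + 1) → Fin n} (hg : StrictMono g)
    (h : ∀ j : Fin k, y (g j.castSucc) * y (g j.succ) < 0) : k ≤ signChanges (List.ofFn y) := by
  have hsub : List.ofFn (y ∘ g) <+ List.ofFn y :=
    List.sublist_iff_exists_fin_orderEmbedding_get_eq.mpr
      ⟨OrderEmbedding.ofStrictMono (fun j => Fin.cast List.length_ofFn.symm
        (g (Fin.cast List.length_ofFn j))) fun a b hab => hg hab, fun j => by
          simp only [List.get_eq_getElem, List.getElem_ofFn, Function.comp_apply]; rfl⟩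
  have hchain : (List.ofFn (y ∘ g)).IsChain (fun a b : ℝ => a * b < 0) := by
    rw [List.isChain_iff_getElem]
    intro i hi
    simp only [List.length_ofFn] at hi
    rw [List.getElem_ofFn, List.getElem_ofFn]
    exact h ⟨i, by omega⟩
  calc k = signChanges (List.ofFn (y ∘ g)) := by
        rw [signChanges_of_isChain hchain, List.length_ofFn]; rfl
    _ ≤ signChanges (List.ofFn y) :=
        signChanges_le_of_sublist hsub (by simpa [List.mem_ofFn] using hy)

theorem le_splus_of_alternating {u : Fin n → ℝ} {g : Fin (k + 1) → Fin n} (hg : StrictMono g)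
    {ε : ℝ} (hε : ε = 1 ∨ ε = -1) (h : ∀ j : Fin (k + 1), 0 ≤ ε * (-1) ^ (j : ℕ) * u (g j)) :
    k ≤ splus u := by
  classical
  set y : Fin n → ℝ := fun i =>
    if u i = 0 then Function.extend g (fun j => ε * (-1) ^ (j : ℕ)) 1 i else u i
  have hfill : ∀ i, u i = 0 → y i = 1 ∨ y i = -1 := fun i hi => by
    simp only [y, if_pos hi]
    by_cases hgi : ∃ j, g j = i
    · obtain ⟨j, rfl⟩ := hgi
      rw [hg.injective.extend_apply]
      rcases hε with rfl | rfl <;> rcases neg_one_pow_eq_or ℝ (j : ℕ) with h | h <;> simp [h]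
    · simp [Function.extend_apply' _ _ _ hgi]
  have hy : ∀ i, y i ≠ 0 := fun i => by
    by_cases hi : u i = 0
    · rcases hfill i hi with h | h <;> simp [h]
    · simp [y, hi]
  have hpos : ∀ j : Fin (k + 1), 0 < ε * (-1) ^ (j : ℕ) * y (g j) := fun j => by
    by_cases hj : u (g j) = 0
    · have : (ε * (-1) ^ (j : ℕ)) * (ε * (-1) ^ (j : ℕ)) = 1 := by
        rcases hε with rfl | rfl <;> rcases neg_one_pow_eq_or ℝ (j : ℕ) with h | h <;> simp [h]
      simp [y, hj, hg.injective.extend_apply, this]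
    · simp only [y, if_neg hj]
      refine lt_of_le_of_ne (h j) (Ne.symm (mul_ne_zero (mul_ne_zero ?_ ?_) hj))
      · rcases hε with rfl | rfl <;> norm_num
      · exact pow_ne_zero _ (by norm_num)
  refine (le_signChanges_ofFn_of_alternating hy hg fun j => ?_).trans
    (signChanges_le_splus (fun i hi => by simp [y, hi]) hfill)
  exact mul_neg_of_alternating j (hpos j.castSucc) (hpos j.succ)

theorem le_splus_of_eq_zero {u : Fin n → ℝ} {r : Fin k → Fin n} (hr : Function.Injective r)
    (hkn : k < n) (hu : ∀ i, u (r i) = 0) : k ≤ splus u := by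
  classical
  obtain ⟨l₀, hl₀⟩ : ∃ l₀, l₀ ∉ univ.image r := by
    by_contra! h
    have := card_le_card (fun l _ => h l : univ ⊆ univ.image r)
    rw [card_image_of_injective _ hr] at this
    simp at this
    omega
  set S := insert l₀ (univ.image r)
  have hS : S.card = k + 1 := by
    rw [card_insert_of_notMem hl₀, card_image_of_injective _ hr, card_univ, Fintype.card_fin]
  obtain ⟨j₀, hj₀⟩ : l₀ ∈ Set.range (S.orderEmbOfFin hS) := by simp [S]
  obtain ⟨ε, hε, hε₀⟩ := exists_sign_mul_nonneg ((-1) ^ (j₀ : ℕ) * u l₀)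
  refine le_splus_of_alternating (S.orderEmbOfFin hS).strictMono hε fun j => ?_
  by_cases hj : j = j₀
  · subst hj
    rw [hj₀, mul_assoc]
    exact hε₀
  · have : S.orderEmbOfFin hS j ∈ univ.image r := by
      rcases mem_insert.mp (orderEmbOfFin_mem S hS j) with h | h
      · exact absurd ((S.orderEmbOfFin hS).injective (h.trans hj₀.symm)) hj
      · exact h
    obtain ⟨i, -, hi⟩ := mem_image.mp this
    rw [← hi, hu, mul_zero]

end Variations

-- column `j` of `T` is the absolute value of the `j`-th block of a vector split into `k`
-- consecutive blocks of constant sign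
structure IsBlockMatrix {n k : ℕ} (T : Matrix (Fin n) (Fin k) ℝ) : Prop where
  nonneg : ∀ l j, 0 ≤ T l j
  exists_pos : ∀ j, ∃ l, 0 < T l j
  lt_of_ne_zero : ∀ {l l' j j'}, j < j' → T l j ≠ 0 → T l' j' ≠ 0 → l < l'

namespace IsBlockMatrix

variable {n k : ℕ} {T : Matrix (Fin n) (Fin k) ℝ}

theorem pos_mul_det_mul (hT : IsBlockMatrix T) {B : Matrix (Fin k) (Fin n) ℝ} {s : ℝ}
    (hB : ∀ c : Fin k → Fin n, StrictMono c → 0 < s * (B.submatrix id c).det) :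
    0 < s * (B * T).det := by
  rw [det_mul_eq_sum_prod_mul_det, mul_sum]
  choose l hl using hT.exists_pos
  refine sum_pos' (fun p _ => ?_) ⟨l, mem_univ _, ?_⟩
  · by_cases hp : ∀ j, T (p j) j ≠ 0
    · rw [mul_left_comm]
      exact mul_nonneg (prod_nonneg fun j _ => hT.nonneg _ _)
        (hB p fun a b hab => hT.lt_of_ne_zero hab (hp a) (hp b)).le
    · obtain ⟨j, hj⟩ := not_forall.mp hp
      rw [prod_eq_zero (f := fun j => T (p j) j) (mem_univ j) (not_not.mp hj), zero_mul, mul_zero]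
  · rw [mul_left_comm]
    exact mul_pos (prod_pos fun j _ => hl j)
      (hB l fun a b hab => hT.lt_of_ne_zero hab (hl a).ne' (hl b).ne')

theorem one : IsBlockMatrix (1 : Matrix (Fin k) (Fin k) ℝ) where
  nonneg l j := by rw [one_apply]; split_ifs <;> norm_num
  exists_pos j := ⟨j, by simp⟩
  lt_of_ne_zero {l l' j j'} h hl hl' := by
    obtain rfl : l = j := by_contra fun h => hl (one_apply_ne h)
    obtain rfl : l' = j' := by_contra fun h => hl' (one_apply_ne h)
    exact h

theorem extend {M : ℕ} {Q : Matrix (Fin M) (Fin k) ℝ} (hQ : IsBlockMatrix Q) {e : Fin M → Fin n}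
    (he : StrictMono e) :
    IsBlockMatrix (Matrix.of fun l j => Function.extend e (fun i => Q i j) 0 l) where
  nonneg l j := by
    by_cases hl : ∃ i, e i = l
    · obtain ⟨i, rfl⟩ := hl
      simpa [he.injective.extend_apply] using hQ.nonneg i j
    · simp [Function.extend_apply' _ _ _ hl]
  exists_pos j := by
    obtain ⟨i, hi⟩ := hQ.exists_pos j
    exact ⟨e i, by simpa [he.injective.extend_apply] using hi⟩
  lt_of_ne_zero {l l' j j'} h hl hl' := by
    simp only [of_apply] at hl hl'
    obtain ⟨i, rfl⟩ := Function.mem_range_of_extend_zero_ne_zero hl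
    obtain ⟨i', rfl⟩ := Function.mem_range_of_extend_zero_ne_zero hl'
    simp only [he.injective.extend_apply] at hl hl'
    exact he (hQ.lt_of_ne_zero h hl hl')

end IsBlockMatrix

section BlockDecomposition

theorem exists_labels_of_sum_lt {v : ℕ → ℝ} {N k : ℕ} (hkN : k ≤ N)
    (hs : ∑ m ∈ range (N - 1), (if v m * v (m + 1) < 0 then 1 else 0) < k) :
    ∃ β : ℕ → ℕ, Monotone β ∧ β 0 = 0 ∧ k - 1 ≤ β (N - 1) ∧ (∀ i, β (i + 1) ≤ β i + 1) ∧
      (∀ i < N, β i < k) ∧ ∀ i, β (i + 1) = β i → ¬v i * v (i + 1) < 0 := by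
  set chg : ℕ → ℕ := fun i => ∑ m ∈ range i, if v m * v (m + 1) < 0 then 1 else 0
  have hchg_mono : Monotone chg := fun a b h => sum_le_sum_of_subset (range_subset_range.mpr h)
  have hchg_succ : ∀ i, chg (i + 1) = chg i + if v i * v (i + 1) < 0 then 1 else 0 :=
    fun i => sum_range_succ _ _
  -- `chg i` counts the sign changes up to `i`; the padding makes the labels reach `k - 1`
  refine ⟨fun i => max (chg i) (i + k - N), fun a b h => max_le_max (hchg_mono h) (by omega),
    by simp [chg]; omega, by simp only; omega, fun i => ?_, fun i hi => ?_, fun i h hneg => ?_⟩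
  · simp only [hchg_succ]
    split_ifs <;> omega
  · have := hchg_mono (show i ≤ N - 1 by omega)
    simp only [chg] at this hs ⊢
    omega
  · simp only [hchg_succ, if_pos hneg] at h
    omega

theorem exists_monotone_surjective_of_signChanges_lt {N k : ℕ} (w : Fin N → ℝ)
    (hw : ∀ i, w i ≠ 0) (hkN : k ≤ N) (hs : signChanges (List.ofFn w) < k) :
    ∃ b : Fin N → Fin k, Monotone b ∧ Function.Surjective b ∧
      ∀ i i', b i = b i' → SignType.sign (w i) = SignType.sign (w i') := by
  set v : ℕ → ℝ := fun i => (List.ofFn w).getD i 0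
  have hv : ∀ i : Fin N, v i = w i := fun i => by simp [v]
  obtain ⟨β, hβ_mono, hβ₀, hβ_last, hβ_step, hβ_lt, hβ_adj⟩ :=
    exists_labels_of_sum_lt (v := v) hkN (by simpa [v, signChanges_eq_sum] using hs)
  have hβ_sign : ∀ i < N - 1, β (i + 1) = β i →
      SignType.sign (v i) = SignType.sign (v (i + 1)) := fun i hi h => by
    have hv₀ := (hv ⟨i, by omega⟩).trans_ne (hw _)
    have hv₁ := (hv ⟨i + 1, by omega⟩).trans_ne (hw _)
    exact (SignType.sign_eq_sign_iff_mul_pos hv₀ hv₁).mpr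
      (lt_of_le_of_ne (not_lt.mp (hβ_adj i h)) (mul_ne_zero hv₀ hv₁).symm)
  refine ⟨fun i => ⟨β i, hβ_lt i i.2⟩, fun a b h => hβ_mono h, fun j => ?_, fun i i' h => ?_⟩
  · obtain ⟨i, hi, hij⟩ := exists_le_eq_of_step_le_one hβ_step (j := j) (N := N - 1)
      (by omega) (by omega)
    exact ⟨⟨i, by omega⟩, Fin.ext hij⟩
  · wlog hle : i ≤ i' generalizing i i'
    · exact (this i' i h.symm (le_of_not_ge hle)).symm
    rw [← hv, ← hv]
    exact sign_eq_of_monotone_of_eq hβ_mono hβ_sign hle (by omega) (congrArg Fin.val h)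

theorem exists_isBlockMatrix_mulVec_eq_of_signChanges_lt {N k : ℕ} (w : Fin N → ℝ)
    (hw : ∀ i, w i ≠ 0) (hkN : k ≤ N) (hs : signChanges (List.ofFn w) < k) :
    ∃ Q : Matrix (Fin N) (Fin k) ℝ, IsBlockMatrix Q ∧ ∃ c ≠ 0, Q *ᵥ c = w := by
  obtain ⟨b, hb_mono, hb_surj, hb_sign⟩ := exists_monotone_surjective_of_signChanges_lt w hw hkN hs
  choose r hr using hb_surj
  refine ⟨Matrix.of fun i j => if b i = j then |w i| else 0, ⟨fun i j => ?_, fun j => ?_, ?_⟩,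
    fun j => (SignType.sign (w (r j)) : ℝ), fun hc => ?_, ?_⟩
  · simp only [of_apply]
    split_ifs <;> simp
  · exact ⟨r j, by simp [hr, hw]⟩
  · intro i i' j j' h hi hi'
    simp only [of_apply, ne_eq, ite_eq_right_iff, not_forall] at hi hi'
    obtain ⟨rfl, -⟩ := hi
    obtain ⟨rfl, -⟩ := hi'
    exact lt_of_not_ge fun hle => (hb_mono hle).not_gt h
  · have hk : 0 < k := (Nat.zero_le _).trans_lt hs
    have : (SignType.sign (w (r ⟨0, hk⟩)) : ℝ) = 0 := congrFun hc ⟨0, hk⟩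
    rcases (hw (r ⟨0, hk⟩)).lt_or_gt with h | h <;> simp [sign_neg, sign_pos, h] at this
  · ext i
    simp [mulVec, dotProduct, hb_sign (r (b i)) i (hr _)]

theorem exists_isBlockMatrix_mulVec_eq {n k : ℕ} {x : Fin n → ℝ} (hx : x ≠ 0) (hkn : k ≤ n)
    (hs : sminus x < k) :
    ∃ T : Matrix (Fin n) (Fin k) ℝ, IsBlockMatrix T ∧ ∃ c ≠ 0, T *ᵥ c = x := by
  obtain ⟨M, e, he, hsupp, Q, hQ, c, hc, hQc⟩ : ∃ M, ∃ e : Fin M → Fin n, StrictMono e ∧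
      (∀ l, x l ≠ 0 → l ∈ Set.range e) ∧
        ∃ Q : Matrix (Fin M) (Fin k) ℝ, IsBlockMatrix Q ∧ ∃ c ≠ 0, Q *ᵥ c = x ∘ e := by
    set S := univ.filter fun l => x l ≠ 0
    by_cases hSk : S.card < k
    · obtain ⟨S', hSS', hS'⟩ := exists_superset_card_eq hSk.le (by simpa using hkn)
      have hsupp : ∀ l, x l ≠ 0 → l ∈ Set.range (S'.orderEmbOfFin hS') := fun l hl => by
        rw [range_orderEmbOfFin]
        exact hSS' (by simp [S, hl])
      refine ⟨k, _, (S'.orderEmbOfFin hS').strictMono, hsupp, 1, IsBlockMatrix.one, _, ?_,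
        one_mulVec _⟩
      obtain ⟨l, hl⟩ := Function.ne_iff.mp hx
      obtain ⟨i, rfl⟩ := hsupp l hl
      exact Function.ne_iff.mpr ⟨i, hl⟩
    · refine ⟨S.card, _, (S.orderEmbOfFin rfl).strictMono, fun l hl => by simp [S, hl],
        exists_isBlockMatrix_mulVec_eq_of_signChanges_lt _ (fun i => ?_) (not_lt.mp hSk)
          (sminus_eq_signChanges_ofFn x ▸ hs)⟩
      exact (mem_filter.mp (orderEmbOfFin_mem S rfl i)).2
  refine ⟨_, hQ.extend he, c, hc, ?_⟩
  rw [of_extend_mulVec Q he.injective, hQc]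
  ext l
  by_cases hl : ∃ i, e i = l
  · obtain ⟨i, rfl⟩ := hl
    simp [he.injective.extend_apply]
  · rw [Function.extend_apply' _ _ _ hl]
    exact (not_not.mp fun h => hl (hsupp l h)).symm

end BlockDecomposition

theorem splus_mulVec_lt {n k : ℕ} {W : Matrix (Fin n) (Fin k) ℝ} {s : ℝ}
    (hW : ∀ r : Fin k → Fin n, StrictMono r → 0 < s * (W.submatrix r id).det) {c : Fin k → ℝ}
    (hc : c ≠ 0) : splus (W *ᵥ c) < k := by
  have hk : 0 < k := Nat.pos_of_ne_zero fun hk => hc (by subst hk; exact Subsingleton.elim _ _)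
  by_contra! h
  obtain ⟨g, hg, ε, hε, hsign⟩ := exists_alternating_of_le_splus hk h
  set B := W.submatrix g id
  have hD : ∀ i : Fin (k + 1), 0 < s * (B.submatrix i.succAbove id).det := fun i =>
    hW _ (hg.comp (Fin.strictMono_succAbove i))
  -- every term of the Laplace expansion below is `≥ 0`, so all of them vanish
  have hsum : ∑ i : Fin (k + 1), (ε * (-1) ^ (i : ℕ) * (W *ᵥ c) (g i)) *
      (s * (B.submatrix i.succAbove id).det) = 0 := by
    calc _ = ε * s * (alternatingMinors B ⬝ᵥ (B *ᵥ c)) := by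
          simp only [dotProduct, mul_sum, alternatingMinors]
          exact sum_congr rfl fun i _ => by rw [show (B *ᵥ c) i = (W *ᵥ c) (g i) from rfl]; ring
      _ = 0 := by rw [dotProduct_mulVec, vecMul_alternatingMinors, zero_dotProduct, mul_zero]
  have hzero : ∀ i : Fin (k + 1), (W *ᵥ c) (g i) = 0 := fun i => by
    have := (sum_eq_zero_iff_of_nonneg fun i _ => mul_nonneg (hsign i) (hD i).le).mp hsum i
      (mem_univ i)
    rcases mul_eq_zero.mp this with h | h
    · rcases hε with rfl | rfl <;> simpa using h
    · exact absurd h (hD i).ne'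
  have hB₀ : (W.submatrix (g ∘ Fin.castSucc) id).det ≠ 0 := fun h0 => by
    simpa [h0] using hW _ (hg.comp Fin.strictMono_castSucc)
  exact hc (eq_zero_of_mulVec_eq_zero hB₀ (funext fun i => hzero i.castSucc))

def SignVariationDiminishing {n : ℕ} (A : Matrix (Fin n) (Fin n) ℝ) (k : ℕ) : Prop :=
  ∀ x : Fin n → ℝ, x ≠ 0 → sminus x < k → splus (A *ᵥ x) < k

namespace SignVariationDiminishing

variable {n k : ℕ} {A : Matrix (Fin n) (Fin n) ℝ}

theorem det_submatrix_ne_zero (hA : SignVariationDiminishing A k) (hdet : IsUnit A.det)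
    {r c : Fin k → Fin n} (hr : Function.Injective r) (hc : Function.Injective c) :
    (A.submatrix r c).det ≠ 0 := by
  intro h0
  obtain ⟨v, hv, hAv⟩ := exists_mulVec_eq_zero_iff.mpr h0
  have hk : 0 < k := Nat.pos_of_ne_zero fun hk => hv (by subst hk; exact Subsingleton.elim _ _)
  have hx := Function.extend_zero_ne_zero hc hv
  have hAx : ∀ i, (A *ᵥ Function.extend c v 0) (r i) = 0 := fun i => by
    rw [mulVec_extend_zero _ hc]
    exact congrFun hAv i
  have hs := hA _ hx (sminus_lt_of_support_subset_range hk c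
    fun l hl => Function.mem_range_of_extend_zero_ne_zero hl)
  rcases (by simpa using Fintype.card_le_of_injective r hr : k ≤ n).lt_or_eq with hkn | rfl
  · exact (le_splus_of_eq_zero hr hkn hAx).not_gt hs
  · have hsurj := (Fintype.bijective_iff_injective_and_card r).mpr ⟨hr, rfl⟩ |>.2
    refine hx (eq_zero_of_mulVec_eq_zero hdet.ne_zero (funext fun l => ?_))
    obtain ⟨i, rfl⟩ := hsurj l
    exact hAx i

theorem mulCompound_ne_zero (hA : SignVariationDiminishing A k) (hdet : IsUnit A.det)
    (α β : {s : Finset (Fin n) // s.card = k}) : mulCompound A k α β ≠ 0 :=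
  hA.det_submatrix_ne_zero hdet (α.1.orderEmbOfFin α.2).injective (β.1.orderEmbOfFin β.2).injective

theorem sign_det_eq_of_cols (hA : SignVariationDiminishing A k) {r : Fin k → Fin n}
    (hr : Function.Injective r) {γ : Fin (k + 1) → Fin n} (hγ : StrictMono γ)
    (hD : ∀ j : Fin (k + 1), (A.submatrix r (γ ∘ j.succAbove)).det ≠ 0) (j j' : Fin (k + 1)) :
    SignType.sign (A.submatrix r (γ ∘ j.succAbove)).det =
      SignType.sign (A.submatrix r (γ ∘ j'.succAbove)).det := by
  refine Fin.apply_eq_apply_of_castSucc_eq_succ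
    (f := fun j => SignType.sign (A.submatrix r (γ ∘ j.succAbove)).det) (fun q => ?_) j j'
  by_contra hne
  have hneg := mul_neg_of_sign_ne (hD _) (hD _) hne
  set z := alternatingMinors (A.submatrix r γ)ᵀ
  have hz : ∀ j : Fin (k + 1),
      z j = (-1) ^ (j : ℕ) * (A.submatrix r (γ ∘ j.succAbove)).det := fun j => by
    rw [← det_transpose]
    rfl
  have hAx : ∀ i, (A *ᵥ Function.extend γ z 0) (r i) = 0 := fun i => by
    have h := congrFun (vecMul_alternatingMinors (A.submatrix r γ)ᵀ) i
    simp only [vecMul, dotProduct, transpose_apply, submatrix_apply, Pi.zero_apply] at h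
    rw [mulVec_extend_zero _ hγ.injective, ← h]
    simp only [mulVec, dotProduct, submatrix_apply, id, z]
    exact sum_congr rfl fun j _ => mul_comm _ _
  have hx : Function.extend γ z 0 ≠ 0 :=
    Function.extend_zero_ne_zero hγ.injective fun h => hD 0 <| by
      simpa [hz] using congrFun h 0
  -- `x` has no sign change between its entries at `γ q` and `γ (q + 1)`
  have hs := sminus_lt_of_support_subset_range_of_mul_nonneg (x := Function.extend γ z 0) hγ
    (fun l hl => Function.mem_range_of_extend_zero_ne_zero hl) q (by
      simp only [hγ.injective.extend_apply, hz, Fin.val_castSucc, Fin.val_succ, pow_succ]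
      have : ((-1 : ℝ) ^ (q : ℕ)) * (-1) ^ (q : ℕ) = 1 := by rw [← mul_pow]; norm_num
      nlinarith)
  have hkn : k < n := by simpa using Fintype.card_le_of_injective γ hγ.injective
  exact (le_splus_of_eq_zero hr hkn hAx).not_gt (hA _ hx hs)

theorem sign_det_eq_of_rows (hA : SignVariationDiminishing A k) {ρ : Fin (k + 1) → Fin n}
    (hρ : StrictMono ρ) {c : Fin k → Fin n} (hc : Function.Injective c)
    (hD : ∀ i : Fin (k + 1), (A.submatrix (ρ ∘ i.succAbove) c).det ≠ 0) (i i' : Fin (k + 1)) :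
    SignType.sign (A.submatrix (ρ ∘ i.succAbove) c).det =
      SignType.sign (A.submatrix (ρ ∘ i'.succAbove) c).det := by
  refine Fin.apply_eq_apply_of_castSucc_eq_succ
    (f := fun i => SignType.sign (A.submatrix (ρ ∘ i.succAbove) c).det) (fun q => ?_) i i'
  by_contra hne
  have hneg := mul_neg_of_sign_ne (hD _) (hD _) hne
  set z := alternatingMinors (A.submatrix ρ c)
  have hzz : 0 < z q.castSucc * z q.succ := by
    have : ((-1 : ℝ) ^ (q : ℕ)) * (-1) ^ (q : ℕ) = 1 := by rw [← mul_pow]; norm_num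
    simp only [z, alternatingMinors, submatrix_submatrix, Function.comp_id, Fin.val_castSucc,
      Fin.val_succ, pow_succ]
    nlinarith
  -- a vector supported on rows `q, q + 1` with opposite signs, orthogonal to `z`
  set u : Fin (k + 1) → ℝ := Pi.single q.castSucc (z q.succ) - Pi.single q.succ (z q.castSucc)
  obtain ⟨v, hv⟩ := exists_mulVec_eq_of_alternatingMinors_dotProduct_eq_zero
    (B := A.submatrix ρ c) (by simpa using hD 0) (u := u)
    (by simp [u, z, dotProduct_sub, dotProduct_single, mul_comm])
  have hAx : ∀ i, (A *ᵥ Function.extend c v 0) (ρ i) = u i := fun i => by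
    rw [mulVec_extend_zero _ hc]
    exact congrFun hv i
  have hq : q.castSucc ≠ q.succ := Fin.castSucc_lt_succ.ne
  have hz₀ : z q.succ ≠ 0 := right_ne_zero_of_mul hzz.ne'
  have hx : Function.extend c v 0 ≠ 0 := fun h => hz₀ <| by
    simpa [h, u, hq] using (hAx q.castSucc).symm
  have hs := hA _ hx (sminus_lt_of_support_subset_range q.pos c
    fun l hl => Function.mem_range_of_extend_zero_ne_zero hl)
  obtain ⟨ε, hε, hε₀⟩ := exists_sign_mul_nonneg ((-1) ^ (q : ℕ) * z q.succ)
  refine (le_splus_of_alternating hρ hε fun j => ?_).not_gt hs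
  rw [hAx]
  rcases eq_or_ne j q.castSucc with rfl | h₁
  · simpa [u, hq, mul_assoc] using hε₀
  rcases eq_or_ne j q.succ with rfl | h₂
  · simp [u, hq.symm, pow_succ]
    nlinarith [mul_nonneg hε₀ hzz.le, sq_pos_of_ne_zero hz₀]
  · simp [u, h₁, h₂]

theorem sign_mulCompound_eq (hA : SignVariationDiminishing A k) (hdet : IsUnit A.det)
    (α β α' β' : {s : Finset (Fin n) // s.card = k}) :
    SignType.sign (mulCompound A k α β) = SignType.sign (mulCompound A k α' β') := by
  have hcols : ∀ α β β',
      SignType.sign (mulCompound A k α β) = SignType.sign (mulCompound A k α β') :=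
    fun α => apply_eq_of_forall_subset_card_add_one _ fun Γ β β' hΓ hβ hβ' => by
      obtain ⟨j, hj⟩ := exists_orderEmbOfFin_eq_comp_succAbove hΓ β.2 hβ
      obtain ⟨j', hj'⟩ := exists_orderEmbOfFin_eq_comp_succAbove hΓ β'.2 hβ'
      simp only [mulCompound, hj, hj']
      exact hA.sign_det_eq_of_cols (α.1.orderEmbOfFin α.2).injective
        (Γ.orderEmbOfFin hΓ).strictMono (fun j => hA.det_submatrix_ne_zero hdet
          (α.1.orderEmbOfFin α.2).injective
          ((Γ.orderEmbOfFin hΓ).injective.comp Fin.succAbove_right_injective)) j j'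
  have hrows : ∀ β α α',
      SignType.sign (mulCompound A k α β) = SignType.sign (mulCompound A k α' β) :=
    fun β => apply_eq_of_forall_subset_card_add_one _ fun Γ α α' hΓ hα hα' => by
      obtain ⟨i, hi⟩ := exists_orderEmbOfFin_eq_comp_succAbove hΓ α.2 hα
      obtain ⟨i', hi'⟩ := exists_orderEmbOfFin_eq_comp_succAbove hΓ α'.2 hα'
      simp only [mulCompound, hi, hi']
      exact hA.sign_det_eq_of_rows (Γ.orderEmbOfFin hΓ).strictMono
        (β.1.orderEmbOfFin β.2).injective (fun i => hA.det_submatrix_ne_zero hdet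
          ((Γ.orderEmbOfFin hΓ).injective.comp Fin.succAbove_right_injective)
          (β.1.orderEmbOfFin β.2).injective) i i'
  exact (hcols α β β').trans (hrows β' α α')

end SignVariationDiminishing

/-- A nonsingular `A` maps every nonzero vector with `s⁻(x) ≤ k-1` to a vector with
`s⁺(Ax) ≤ k-1` iff `A` is strictly sign-regular of order `k` (all `k × k` minors positive,
or all negative). -/
theorem splus_invariant_iff_strictly_sign_regular {n : ℕ} (A : Matrix (Fin n) (Fin n) ℝ)
    (hA : IsUnit A.det) (k : ℕ) (hk1 : 1 ≤ k) (hk : k ≤ n) :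
    (∀ x : Fin n → ℝ, x ≠ 0 → sminus x ≤ k - 1 → splus (A.mulVec x) ≤ k - 1) ↔
      ((∀ α β : {s : Finset (Fin n) // s.card = k},
          0 < (A.submatrix (α.1.orderEmbOfFin α.2) (β.1.orderEmbOfFin β.2)).det) ∨
        (∀ α β : {s : Finset (Fin n) // s.card = k},
          (A.submatrix (α.1.orderEmbOfFin α.2) (β.1.orderEmbOfFin β.2)).det < 0)) := by
  have hiff : (∀ x : Fin n → ℝ, x ≠ 0 → sminus x ≤ k - 1 → splus (A.mulVec x) ≤ k - 1) ↔
      SignVariationDiminishing A k :=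
    forall₂_congr fun x _ => by constructor <;> intro h h' <;> have := h (by omega) <;> omega
  rw [hiff]
  constructor
  · intro hvd
    obtain ⟨s₀, -, hs₀⟩ := exists_subset_card_eq (s := (univ : Finset (Fin n))) (by simpa using hk)
    have hsign := fun α β => hvd.sign_mulCompound_eq hA α β ⟨s₀, hs₀⟩ ⟨s₀, hs₀⟩
    rcases (hvd.mulCompound_ne_zero hA ⟨s₀, hs₀⟩ ⟨s₀, hs₀⟩).lt_or_gt with hneg | hpos
    · exact Or.inr fun α β => sign_eq_neg_one_iff.mp ((hsign α β).trans (sign_neg hneg))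
    · exact Or.inl fun α β => sign_eq_one_iff.mp ((hsign α β).trans (sign_pos hpos))
  · intro hSSR x hx hs
    obtain ⟨s, hsA⟩ : ∃ s : ℝ, ∀ α β, 0 < s * mulCompound A k α β := hSSR.elim
      (fun h => ⟨1, fun α β => by simpa [mulCompound] using h α β⟩)
      (fun h => ⟨-1, fun α β => by simpa [mulCompound] using h α β⟩)
    obtain ⟨T, hT, c, hc, rfl⟩ := exists_isBlockMatrix_mulVec_eq hx hk hs
    rw [mulVec_mulVec]
    refine splus_mulVec_lt (s := s) (fun r hr => hT.pos_mul_det_mul (B := A.submatrix r id)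
      fun c hc => ?_) hc
    rw [submatrix_submatrix, Function.comp_id, Function.id_comp,
      det_submatrix_eq_mulCompound A hr hc]
    exact hsA _ _
end

section
/- Let A ∈ ℝ^{n×n} with n ≥ 3 and let k be odd with 1 < k < n−1. Then A^{[k]} is Metzler if and only if: a_{1n} ≥ 0, a_{n1} ≥ 0, a_{ij} ≥ 0 for all i,j with |i−j| = 1, and a_{ij} = 0 for all i,j with 1 < |i−j| < n−1. -/
open Matrix

/-- A square matrix is Metzler if all its off-diagonal entries are nonnegative. -/
def IsMetzler {ι : Type*} (B : Matrix ι ι ℝ) : Prop :=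
  ∀ i j, i ≠ j → 0 ≤ B i j


/-!
Differentiating `det ((1 + ε A)[α, β])` at `ε = 0` one row at a time shows that the entry
`A^{[k]}_{αβ}` vanishes when `α` and `β` differ in two or more indices, and equals
`(-1)^s a_{ij}` when `α = S ∪ {i}` and `β = S ∪ {j}`, where `s` counts the elements of `S`
strictly between `i` and `j`. If `|i - j| = d`, the values taken by `s` are exactly the `t` with
`t < d` and `d + (k - 1 - t) < n`. For `d = 1` only `t = 0` occurs, for `d = n - 1` only the even
value `t = k - 1`, and otherwise two consecutive values occur, which forces `a_{ij} = 0`.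
-/

open Finset

theorem Matrix.hasDerivAt_det_add_smul_s17 {𝕜 ι : Type*} [NontriviallyNormedField 𝕜] [Fintype ι]
    [DecidableEq ι] (P B : Matrix ι ι 𝕜) :
    HasDerivAt (fun ε : 𝕜 => (P + ε • B).det) (∑ r, (P.updateRow r (B r)).det) 0 := by
  let detMultilinear : ContinuousMultilinearMap 𝕜 (fun _ : ι => ι → 𝕜) 𝕜 :=
    ⟨detRowAlternating.toMultilinearMap, continuous_id.matrix_det⟩
  have hline : HasDerivAt (fun ε : 𝕜 => of.symm P + ε • of.symm B) (of.symm B) 0 := by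
    simpa using ((hasDerivAt_id (0 : 𝕜)).smul_const (of.symm B)).const_add (of.symm P)
  have := (detMultilinear.hasFDerivAt (of.symm P)).comp_hasDerivAt_of_eq 0 hline (by simp)
  rwa [ContinuousMultilinearMap.linearDeriv_apply] at this

namespace Matrix

theorem one_submatrix_orderEmbOfFin_row_eq_zero {R : Type*} [Zero R] [One R] {n k : ℕ}
    {α β : Finset (Fin n)} (hα : #α = k) (hβ : #β = k) {ℓ : Fin k}
    (hℓ : α.orderEmbOfFin hα ℓ ∉ β) :
    (1 : Matrix (Fin n) (Fin n) R).submatrix (α.orderEmbOfFin hα) (β.orderEmbOfFin hβ) ℓ = 0 :=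
  funext fun c => one_apply_ne fun h => hℓ (h ▸ orderEmbOfFin_mem β hβ c)

variable {R ι : Type*} [CommRing R] [Fintype ι] [DecidableEq ι]

theorem sum_det_updateRow_of_row_eq_zero (P B : Matrix ι ι R) {ℓ : ι} (hℓ : P ℓ = 0) :
    ∑ r, (P.updateRow r (B r)).det = (P.updateRow ℓ (B ℓ)).det :=
  Fintype.sum_eq_single ℓ fun r hr =>
    det_eq_zero_of_row_eq_zero ℓ fun c => by rw [updateRow_ne (Ne.symm hr), hℓ, Pi.zero_apply]

theorem sum_det_updateRow_eq_zero (P B : Matrix ι ι R) {ℓ ℓ' : ι} (hne : ℓ ≠ ℓ')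
    (hℓ : P ℓ = 0) (hℓ' : P ℓ' = 0) : ∑ r, (P.updateRow r (B r)).det = 0 := by
  rw [sum_det_updateRow_of_row_eq_zero P B hℓ]
  exact det_eq_zero_of_row_eq_zero ℓ' fun c => by rw [updateRow_ne hne.symm, hℓ', Pi.zero_apply]

theorem det_updateRow_of_submatrix_succAbove_eq_one {K : ℕ}
    (P : Matrix (Fin (K + 1)) (Fin (K + 1)) R) (v : Fin (K + 1) → R) {ℓ m : Fin (K + 1)}
    (hm : ∀ r, P r m = 0) (hminor : P.submatrix ℓ.succAbove m.succAbove = 1) :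
    (P.updateRow ℓ v).det = (-1) ^ (ℓ + m : ℕ) * v m := by
  rw [det_succ_row _ ℓ, Fintype.sum_eq_single m, submatrix_updateRow_succAbove, hminor, det_one,
    updateRow_self, mul_one]
  intro c hc
  obtain ⟨m', hm'⟩ := Fin.exists_succAbove_eq (Ne.symm hc)
  rw [submatrix_updateRow_succAbove,
    det_eq_zero_of_column_eq_zero m' fun r => by rw [submatrix_apply, hm', hm], mul_zero]

end Matrix

namespace Finset

variable {α : Type*} [LinearOrder α]

theorem card_filter_lt_orderEmbOfFin (s : Finset α) {k : ℕ} (h : #s = k) (p : Fin k) :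
    #{x ∈ s | x < s.orderEmbOfFin h p} = p := by
  have : {x ∈ s | x < s.orderEmbOfFin h p} = (Iio p).map (s.orderEmbOfFin h).toEmbedding := by
    ext x
    simp only [mem_filter, mem_map, mem_Iio, RelEmbedding.coe_toEmbedding]
    constructor
    · rintro ⟨hx, hlt⟩
      obtain ⟨q, rfl⟩ : x ∈ Set.range (s.orderEmbOfFin h) := by rwa [range_orderEmbOfFin]
      exact ⟨q, (s.orderEmbOfFin h).lt_iff_lt.1 hlt, rfl⟩
    · rintro ⟨q, hq, rfl⟩
      exact ⟨orderEmbOfFin_mem s h q, (s.orderEmbOfFin h).lt_iff_lt.2 hq⟩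
  rw [this, card_map, Fin.card_Iio]

theorem orderEmbOfFin_comp_succAbove (s : Finset α) {K : ℕ} (h : #s = K + 1) (ℓ : Fin (K + 1))
    {t : Finset α} (ht : s.erase (s.orderEmbOfFin h ℓ) = t) (htK : #t = K) :
    s.orderEmbOfFin h ∘ ℓ.succAbove = t.orderEmbOfFin htK := by
  refine orderEmbOfFin_unique htK (fun x => ?_)
    ((s.orderEmbOfFin h).strictMono.comp (Fin.strictMono_succAbove ℓ))
  rw [← ht]
  exact mem_erase.2 ⟨fun hx => Fin.succAbove_ne ℓ x ((s.orderEmbOfFin h).injective hx),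
    orderEmbOfFin_mem s h _⟩

theorem card_filter_lt_eq_add_card_inter_Ioo [LocallyFiniteOrder α] (s : Finset α) {i j : α}
    (hij : i ≤ j) (hi : i ∉ s) : #{x ∈ s | x < j} = #{x ∈ s | x < i} + #(s ∩ Ioo i j) := by
  rw [← card_union_of_disjoint]
  · congr 1
    ext x
    simp only [mem_filter, mem_union, mem_inter, mem_Ioo]
    constructor
    · rintro ⟨hx, hxj⟩
      rcases lt_or_gt_of_ne (fun h : x = i => hi (h ▸ hx)) with hxi | hxi
      exacts [Or.inl ⟨hx, hxi⟩, Or.inr ⟨hx, hxi, hxj⟩]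
    · rintro (⟨hx, hxi⟩ | ⟨hx, -, hxj⟩)
      exacts [⟨hx, hxi.trans_le hij⟩, ⟨hx, hxj⟩]
  · simp only [disjoint_left, mem_filter, mem_inter, mem_Ioo]
    exact fun x hx hx' => hx.2.not_gt hx'.2.1

theorem neg_one_pow_card_filter_lt_add {R : Type*} [Monoid R] [HasDistribNeg R]
    [LocallyFiniteOrder α] (s : Finset α) {i j : α} (hi : i ∉ s) (hj : j ∉ s) :
    (-1 : R) ^ (#{x ∈ s | x < i} + #{x ∈ s | x < j}) =
      (-1) ^ #(s ∩ Ioo (min i j) (max i j)) := by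
  have key : ∀ a b : ℕ, (-1 : R) ^ (a + (a + b)) = (-1) ^ b := fun a b => by
    rw [← add_assoc, ← two_mul, pow_add, pow_mul, neg_one_sq, one_pow, one_mul]
  rcases le_total i j with hij | hij
  · rw [min_eq_left hij, max_eq_right hij, card_filter_lt_eq_add_card_inter_Ioo s hij hi, key]
  · rw [min_eq_right hij, max_eq_left hij, card_filter_lt_eq_add_card_inter_Ioo s hij hj,
      add_comm, key]

theorem exists_subset_card_inter_eq {β : Type*} [DecidableEq β] {X Y : Finset β}
    (hXY : X ⊆ Y) {t u : ℕ} (ht : t ≤ #X) (hu : u ≤ #(Y \ X)) :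
    ∃ S ⊆ Y, #S = t + u ∧ #(S ∩ X) = t := by
  obtain ⟨T, hTX, rfl⟩ := exists_subset_card_eq ht
  obtain ⟨U, hUY, rfl⟩ := exists_subset_card_eq hu
  have hUX : Disjoint U X := disjoint_of_subset_left hUY sdiff_disjoint
  have hTU : Disjoint T U := disjoint_of_subset_left hTX hUX.symm
  refine ⟨T ∪ U, union_subset (hTX.trans hXY) (hUY.trans sdiff_subset),
    card_union_of_disjoint hTU, ?_⟩
  rw [union_inter_distrib_right, inter_eq_left.2 hTX, disjoint_iff_inter_eq_empty.1 hUX,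
    union_empty]

end Finset

namespace Fin

variable {n : ℕ}

theorem dist_lt (i j : Fin n) : Nat.dist i j < n := by
  have := i.isLt
  have := j.isLt
  simp only [Nat.dist]
  omega

theorem card_Ioo_min_max (i j : Fin n) : #(Ioo (min i j) (max i j)) = Nat.dist i j - 1 := by
  rw [card_Ioo, coe_max, coe_min, Nat.dist]
  omega

theorem exists_card_inter_Ioo_eq_iff {i j : Fin n} (hij : i ≠ j) {t u : ℕ} :
    (∃ S : Finset (Fin n), #S = t + u ∧ i ∉ S ∧ j ∉ S ∧ #(S ∩ Ioo (min i j) (max i j)) = t) ↔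
      t < Nat.dist i j ∧ Nat.dist i j + u < n := by
  set I := Ioo (min i j) (max i j)
  have hIY : I ⊆ {i, j}ᶜ := fun x hx => by
    have := mem_Ioo.1 hx
    rw [lt_def, lt_def, coe_min, coe_max] at this
    simp only [mem_compl, mem_insert, mem_singleton, not_or, ← val_ne_iff]
    omega
  have hd := Nat.dist_pos_of_ne (val_ne_of_ne hij)
  have hdn := dist_lt i j
  have hI : #I = Nat.dist i j - 1 := card_Ioo_min_max i j
  have hYI : #({i, j}ᶜ \ I) = n - 1 - Nat.dist i j := by
    rw [card_sdiff_of_subset hIY, card_compl, card_pair hij, Fintype.card_fin, hI]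
    omega
  constructor
  · rintro ⟨S, hS, hi, hj, rfl⟩
    have hSY : S ⊆ {i, j}ᶜ := fun x hx => by
      simp only [mem_compl, mem_insert, mem_singleton, not_or]
      exact ⟨fun h => hi (h ▸ hx), fun h => hj (h ▸ hx)⟩
    have h1 : #(S ∩ I) ≤ #I := card_le_card inter_subset_right
    have h2 : #(S \ I) ≤ #({i, j}ᶜ \ I) := card_le_card (sdiff_subset_sdiff hSY le_rfl)
    have h3 := card_inter_add_card_sdiff S I
    omega
  · rintro ⟨ht, hu⟩
    obtain ⟨S, hSY, hS, hSI⟩ := exists_subset_card_inter_eq hIY (t := t) (u := u)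
      (by omega) (by omega)
    refine ⟨S, hS, fun hi => ?_, fun hj => ?_, hSI⟩
    · simpa using hSY hi
    · simpa using hSY hj

end Fin

section addCompound

variable {𝕜 : Type*} [NontriviallyNormedField 𝕜] {n k : ℕ}

theorem addCompound_apply_s17 (A : Matrix (Fin n) (Fin n) 𝕜)
    (α β : {s : Finset (Fin n) // #s = k}) :
    addCompound A k α β =
      ∑ r, (((1 : Matrix (Fin n) (Fin n) 𝕜).submatrix (α.1.orderEmbOfFin α.2)
        (β.1.orderEmbOfFin β.2)).updateRow r
          (A.submatrix (α.1.orderEmbOfFin α.2) (β.1.orderEmbOfFin β.2) r)).det :=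
  (hasDerivAt_det_add_smul_s17 _ _).deriv

theorem addCompound_apply_eq_zero_of_two_le_card_sdiff (A : Matrix (Fin n) (Fin n) 𝕜)
    (α β : {s : Finset (Fin n) // #s = k}) (h : 2 ≤ #(α.1 \ β.1)) :
    addCompound A k α β = 0 := by
  obtain ⟨x, hx, y, hy, hxy⟩ := one_lt_card.1 h
  rw [mem_sdiff] at hx hy
  obtain ⟨ℓ, rfl⟩ : x ∈ Set.range (α.1.orderEmbOfFin α.2) := by
    rw [range_orderEmbOfFin]; exact hx.1
  obtain ⟨ℓ', rfl⟩ : y ∈ Set.range (α.1.orderEmbOfFin α.2) := by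
    rw [range_orderEmbOfFin]; exact hy.1
  rw [addCompound_apply_s17]
  exact sum_det_updateRow_eq_zero _ _ (ne_of_apply_ne _ hxy)
    (one_submatrix_orderEmbOfFin_row_eq_zero _ _ hx.2)
    (one_submatrix_orderEmbOfFin_row_eq_zero _ _ hy.2)

theorem addCompound_apply_insert (A : Matrix (Fin n) (Fin n) 𝕜) {S : Finset (Fin n)}
    {i j : Fin n} (hij : i ≠ j) (hi : i ∉ S) (hj : j ∉ S) (hα : #(insert i S) = k)
    (hβ : #(insert j S) = k) :
    addCompound A k ⟨insert i S, hα⟩ ⟨insert j S, hβ⟩ =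
      (-1) ^ #(S ∩ Ioo (min i j) (max i j)) * A i j := by
  obtain ⟨K, rfl⟩ : ∃ K, k = K + 1 := ⟨#S, by rw [← hα, card_insert_of_notMem hi]⟩
  have hS : #S = K := by rw [card_insert_of_notMem hi] at hα; omega
  set e := (insert i S).orderEmbOfFin hα
  set f := (insert j S).orderEmbOfFin hβ
  obtain ⟨ℓ, hℓ⟩ : i ∈ Set.range e := by rw [range_orderEmbOfFin]; exact mem_insert_self i S
  obtain ⟨m, hm⟩ : j ∈ Set.range f := by rw [range_orderEmbOfFin]; exact mem_insert_self j S
  have hrow : (1 : Matrix (Fin n) (Fin n) 𝕜).submatrix e f ℓ = 0 :=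
    one_submatrix_orderEmbOfFin_row_eq_zero _ _ <| by
      rw [hℓ, mem_insert]; exact fun h => h.elim hij hi
  have hcol : ∀ r, (1 : Matrix (Fin n) (Fin n) 𝕜).submatrix e f r m = 0 := fun r =>
    one_apply_ne fun h => by
      have := orderEmbOfFin_mem _ hα r
      rw [h, hm, mem_insert] at this
      exact this.elim hij.symm hj
  have hminor :
      ((1 : Matrix (Fin n) (Fin n) 𝕜).submatrix e f).submatrix ℓ.succAbove m.succAbove = 1 := by
    rw [submatrix_submatrix,
      orderEmbOfFin_comp_succAbove _ hα ℓ (by rw [hℓ, erase_insert hi]) hS,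
      orderEmbOfFin_comp_succAbove _ hβ m (by rw [hm, erase_insert hj]) hS]
    exact submatrix_one _ (S.orderEmbOfFin hS).injective
  have hposℓ := card_filter_lt_orderEmbOfFin _ hα ℓ
  have hposm := card_filter_lt_orderEmbOfFin _ hβ m
  rw [hℓ, filter_insert, if_neg (lt_irrefl i)] at hposℓ
  rw [hm, filter_insert, if_neg (lt_irrefl j)] at hposm
  rw [addCompound_apply_s17, sum_det_updateRow_of_row_eq_zero _ _ hrow,
    det_updateRow_of_submatrix_succAbove_eq_one _ _ hcol hminor, ← hposℓ, ← hposm,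
    neg_one_pow_card_filter_lt_add S hi hj, submatrix_apply, hℓ, hm]

end addCompound

theorem isMetzler_addCompound_succ_iff {n k : ℕ} (A : Matrix (Fin n) (Fin n) ℝ) :
    IsMetzler (addCompound A (k + 1)) ↔ ∀ i j, i ≠ j → ∀ S : Finset (Fin n), #S = k →
      i ∉ S → j ∉ S → 0 ≤ (-1) ^ #(S ∩ Ioo (min i j) (max i j)) * A i j := by
  constructor
  · intro hM i j hij S hS hi hj
    have hne : (⟨insert i S, by rw [card_insert_of_notMem hi, hS]⟩ :
        {s : Finset (Fin n) // #s = k + 1}) ≠ ⟨insert j S, by rw [card_insert_of_notMem hj, hS]⟩ :=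
      fun h => by
        have hSS : insert i S = insert j S := congrArg Subtype.val h
        exact (mem_insert.1 (hSS ▸ mem_insert_self i S)).elim hij hi
    simpa only [addCompound_apply_insert A hij hi hj] using hM _ _ hne
  · rintro h ⟨α, hα⟩ ⟨β, hβ⟩ hne
    by_cases h2 : 2 ≤ #(α \ β)
    · exact (addCompound_apply_eq_zero_of_two_le_card_sdiff A _ _ h2).ge
    have hαβ : #(α \ β) = 1 := by
      have : #(α \ β) ≠ 0 := fun h0 => hne (Subtype.ext (eq_of_subset_of_card_le
        (sdiff_eq_empty_iff_subset.1 (card_eq_zero.1 h0)) (by rw [hα, hβ])))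
      omega
    obtain ⟨i, hi⟩ := card_eq_one.1 hαβ
    obtain ⟨j, hj⟩ := card_eq_one.1 ((card_sdiff_comm (hα.trans hβ.symm)).symm.trans hαβ)
    obtain ⟨hiα, hiβ⟩ := mem_sdiff.1 (hi ▸ mem_singleton_self i)
    obtain ⟨-, hjα⟩ := mem_sdiff.1 (hj ▸ mem_singleton_self j)
    have hij : i ≠ j := fun h => hjα (h ▸ hiα)
    have hiS : i ∉ α ∩ β := fun h => hiβ (mem_inter.1 h).2
    have hjS : j ∉ α ∩ β := fun h => hjα (mem_inter.1 h).1
    have hα' : α = insert i (α ∩ β) := by rw [insert_eq, ← hi, sdiff_union_inter]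
    have hβ' : β = insert j (α ∩ β) := by rw [insert_eq, ← hj, inter_comm, sdiff_union_inter]
    generalize α ∩ β = S at hiS hjS hα' hβ'
    subst hα' hβ'
    rw [addCompound_apply_insert A hij hiS hjS]
    exact h i j hij S (by rw [card_insert_of_notMem hiS] at hα; omega) hiS hjS

theorem isMetzler_addCompound_succ_iff_dist {n k : ℕ} (A : Matrix (Fin n) (Fin n) ℝ) :
    IsMetzler (addCompound A (k + 1)) ↔ ∀ i j : Fin n, i ≠ j → ∀ t u, t + u = k →
      t < Nat.dist i j → Nat.dist i j + u < n → 0 ≤ (-1) ^ t * A i j := by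
  rw [isMetzler_addCompound_succ_iff]
  refine forall₂_congr fun i j => forall_congr' fun hij =>
    ⟨fun h t u htu ht hu => ?_, fun h S hS hi hj => ?_⟩
  · obtain ⟨S, hS, hi, hj, rfl⟩ := (Fin.exists_card_inter_Ioo_eq_iff hij).2 ⟨ht, hu⟩
    exact h S (hS.trans htu) hi hj
  · obtain ⟨ht, hu⟩ := (Fin.exists_card_inter_Ioo_eq_iff hij).1
      ⟨S, (card_inter_add_card_sdiff S _).symm, hi, hj, rfl⟩
    exact h _ _ (by rw [card_inter_add_card_sdiff, hS]) ht hu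

theorem eq_zero_of_neg_one_pow_mul_nonneg {R : Type*} [Ring R] [PartialOrder R]
    [IsOrderedAddMonoid R] {a : R} {t : ℕ} (h : 0 ≤ (-1) ^ t * a)
    (h' : 0 ≤ (-1) ^ (t + 1) * a) : a = 0 := by
  rw [pow_succ, mul_neg_one, neg_mul, neg_nonneg] at h'
  exact (isUnit_neg_one.pow t).mul_right_eq_zero.1 (le_antisymm h' h)

theorem forall_neg_one_pow_mul_nonneg_iff {R : Type*} [Ring R] [PartialOrder R]
    [IsOrderedAddMonoid R] {a : R} {n K d : ℕ} (hK : Even K) (hK1 : 1 ≤ K) (hKn : K + 3 ≤ n)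
    (hd : 0 < d) (hdn : d < n) :
    (∀ t u, t + u = K → t < d → d + u < n → 0 ≤ (-1) ^ t * a) ↔
      (d = 1 → 0 ≤ a) ∧ (d = n - 1 → 0 ≤ a) ∧ (1 < d → d < n - 1 → a = 0) := by
  constructor
  · intro h
    refine ⟨fun hd1 => by simpa using h 0 K (zero_add K) (by omega) (by omega),
      fun hd1 => by simpa [hK.neg_one_pow] using h K 0 rfl (by omega) (by omega),
      fun hd1 hd2 => ?_⟩
    set t := K - (n - 1 - d)
    exact eq_zero_of_neg_one_pow_mul_nonneg (h t (K - t) (by omega) (by omega) (by omega))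
      (h (t + 1) (K - (t + 1)) (by omega) (by omega) (by omega))
  · rintro ⟨hadj, hcorner, hfar⟩ t u htu ht hu
    obtain hd | hd | ⟨hd1, hd2⟩ : d = 1 ∨ d = n - 1 ∨ (1 < d ∧ d < n - 1) := by omega
    · obtain rfl : t = 0 := by omega
      simpa using hadj hd
    · obtain rfl : t = K := by omega
      simpa [hK.neg_one_pow] using hcorner hd
    · rw [hfar hd1 hd2, mul_zero]

/-- For odd `k` with `1 < k < n-1`, `A^{[k]}` is Metzler iff `a_{1n}, a_{n1} ≥ 0`,
`a_{ij} ≥ 0` whenever `|i - j| = 1`, and `a_{ij} = 0` whenever `1 < |i - j| < n-1`. -/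
theorem addCompound_metzler_odd {n : ℕ} (hn : 3 ≤ n) (A : Matrix (Fin n) (Fin n) ℝ)
    (k : ℕ) (hodd : Odd k) (hk1 : 1 < k) (hk2 : k < n - 1) :
    IsMetzler (addCompound A k) ↔
      (0 ≤ A ⟨0, by omega⟩ ⟨n - 1, by omega⟩ ∧ 0 ≤ A ⟨n - 1, by omega⟩ ⟨0, by omega⟩ ∧
        (∀ i j : Fin n, Nat.dist i j = 1 → 0 ≤ A i j) ∧
        (∀ i j : Fin n, 1 < Nat.dist i j → Nat.dist i j < n - 1 → A i j = 0)) := by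
  obtain ⟨K, rfl⟩ : ∃ K, k = K + 1 := ⟨k - 1, by omega⟩
  have hK : Even K := by simpa [Nat.odd_add_one] using hodd
  rw [isMetzler_addCompound_succ_iff_dist,
    forall₂_congr fun i j => forall_congr' fun (hij : i ≠ j) =>
      forall_neg_one_pow_mul_nonneg_iff (a := A i j) (n := n) hK (by omega) (by omega)
        (Nat.dist_pos_of_ne (Fin.val_ne_of_ne hij)) (Fin.dist_lt i j)]
  refine ⟨fun h => ⟨?_, ?_, fun i j hd => ?_, fun i j hd1 hd2 => ?_⟩, ?_⟩
  · exact (h _ _ (by simp; omega)).2.1 (by simp [Nat.dist])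
  · exact (h _ _ (by simp; omega)).2.1 (by simp [Nat.dist])
  · exact (h i j (by rintro rfl; simp at hd)).1 hd
  · exact (h i j (by rintro rfl; simp at hd1)).2.2 hd1 hd2
  · rintro ⟨h0n, hn0, hadj, hfar⟩ i j -
    refine ⟨hadj i j, fun hd => ?_, hfar i j⟩
    obtain ⟨hi, hj⟩ | ⟨hi, hj⟩ :
        (i : ℕ) = 0 ∧ (j : ℕ) = n - 1 ∨ (i : ℕ) = n - 1 ∧ (j : ℕ) = 0 := by
      have := i.isLt
      have := j.isLt
      simp only [Nat.dist] at hd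
      omega
    · exact h0n.trans_eq (congrArg₂ A (Fin.ext hi.symm) (Fin.ext hj.symm))
    · exact hn0.trans_eq (congrArg₂ A (Fin.ext hi.symm) (Fin.ext hj.symm))
end

section
/- Let A ∈ ℝ^{n×n} with n ≥ 3. Then A^{[n−1]} is Metzler if and only if a_{ij} ≥ 0 for all i ≠ j with i−j odd, and a_{ij} ≤ 0 for all i ≠ j with i−j even. -/
/-!
Every `n`-subset of `Fin (n + 1)` is the complement of a point, and the minor of `B` obtained by
deleting row `i` and column `j` is `(-1) ^ (i + j)` times the adjugate entry `adj B j i`. So the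
entries of `A^{[n]}` are `(-1) ^ (i + j)` times the first-order coefficients of `adj (1 + εA)`,
which are read off from `adj M * M = det M • 1` and `adj 1 = 1`: off the diagonal,
`adj (1 + εA) j i = -ε A j i + O(ε²)`. The sign `-(-1) ^ (i + j)` is `+1` exactly when `i - j`
is odd.
-/

open Matrix

open Polynomial

section Adjugate

variable {ι R : Type*} [Fintype ι] [DecidableEq ι] [CommRing R]

theorem eval_adjugate_one_add_X_smul (A : Matrix ι ι R) (r : R) :
    (adjugate (1 + (X : R[X]) • A.map C)).map (eval r) = adjugate (1 + r • A) := by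
  have h := (evalRingHom r).map_adjugate (1 + (X : R[X]) • A.map C)
  rw [RingHom.mapMatrix_apply, RingHom.mapMatrix_apply, coe_evalRingHom] at h
  rw [h]
  congr 1
  ext i j
  by_cases hij : i = j <;> simp [hij] <;> ring

theorem eval_zero_derivative_adjugate_one_add_X_smul (A : Matrix ι ι R) {i j : ι} (hij : i ≠ j) :
    (derivative (adjugate (1 + (X : R[X]) • A.map C) i j)).eval 0 = -A i j := by
  set M : Matrix ι ι R[X] := 1 + (X : R[X]) • A.map C
  have hM : ∀ k, (M k j).eval 0 = if k = j then 1 else 0 := fun k => by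
    by_cases hk : k = j <;> simp [M, hk]
  have hM' : ∀ k, (derivative (M k j)).eval 0 = A k j := fun k => by
    simp [M, Matrix.one_apply, apply_ite]
  have hadj : ∀ k, (adjugate M i k).eval 0 = if i = k then 1 else 0 := fun k => by
    simpa [one_apply] using congrFun₂ (eval_adjugate_one_add_X_smul A 0) i k
  have hprod : ∑ k, adjugate M i k * M k j = 0 := by
    rw [← Matrix.mul_apply, adjugate_mul, Matrix.smul_apply, one_apply_ne hij, smul_zero]
  have hderiv := congrArg (fun p => (derivative p).eval 0) hprod
  simp only [map_sum, derivative_mul, eval_finsetSum, eval_add, eval_mul, derivative_zero,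
    eval_zero, hM, hM', hadj, mul_ite, ite_mul, mul_one, mul_zero, one_mul, zero_mul,
    Finset.sum_add_distrib, Finset.sum_ite_eq', Finset.sum_ite_eq, Finset.mem_univ,
    if_true] at hderiv
  linear_combination hderiv

end Adjugate

theorem deriv_adjugate_one_add_smul_apply {𝕜 : Type*} [NontriviallyNormedField 𝕜]
    {ι : Type*} [Fintype ι] [DecidableEq ι] (A : Matrix ι ι 𝕜) {i j : ι} (hij : i ≠ j) :
    deriv (fun ε : 𝕜 => adjugate (1 + ε • A) i j) 0 = -A i j := by
  have h (ε : 𝕜) : adjugate (1 + ε • A) i j = (adjugate (1 + (X : 𝕜[X]) • A.map C) i j).eval ε :=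
    (congrFun₂ (eval_adjugate_one_add_X_smul A ε) i j).symm
  simp_rw [h, Polynomial.deriv]
  exact eval_zero_derivative_adjugate_one_add_X_smul A hij

section Compound

variable {n : ℕ}

def complSingleton (i : Fin (n + 1)) : {s : Finset (Fin (n + 1)) // s.card = n} :=
  ⟨{i}ᶜ, by simp [Finset.card_compl]⟩

theorem complSingleton_bijective : Function.Bijective (complSingleton (n := n)) := by
  refine ⟨fun i j h => by simpa [complSingleton] using h, fun s => ?_⟩
  obtain ⟨i, hi⟩ := Finset.card_eq_one.1 (by simp [Finset.card_compl, s.2] : s.1ᶜ.card = 1)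
  exact ⟨i, Subtype.ext (by simp [complSingleton, ← hi])⟩

theorem mulCompound_complSingleton {R : Type*} [CommRing R]
    (B : Matrix (Fin (n + 1)) (Fin (n + 1)) R) (i j : Fin (n + 1)) :
    mulCompound B n (complSingleton i) (complSingleton j) =
      (-1) ^ (i + j : ℕ) * adjugate B j i := by
  rw [adjugate_fin_succ_eq_det_submatrix, ← mul_assoc, ← pow_add, Even.neg_one_pow ⟨_, rfl⟩,
    one_mul]
  simp only [mulCompound, complSingleton,
    Finset.orderEmbOfFin_compl_singleton_eq_succAboveOrderEmb]
  rfl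

theorem addCompound_complSingleton {𝕜 : Type*} [NontriviallyNormedField 𝕜]
    (A : Matrix (Fin (n + 1)) (Fin (n + 1)) 𝕜) {i j : Fin (n + 1)} (hij : i ≠ j) :
    addCompound A n (complSingleton i) (complSingleton j) = -(-1) ^ (i + j : ℕ) * A j i := by
  simp only [addCompound, mulCompound_complSingleton, deriv_const_mul_field',
    deriv_adjugate_one_add_smul_apply A hij.symm]
  ring

end Compound

theorem isMetzler_submatrix_iff {ι κ : Type*} (B : Matrix ι ι ℝ) {e : κ → ι}
    (he : Function.Bijective e) : IsMetzler (B.submatrix e e) ↔ IsMetzler B := by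
  simp only [IsMetzler, submatrix_apply, he.surjective.forall, he.injective.ne_iff]

theorem Nat.even_dist_iff (a b : ℕ) : Even (Nat.dist a b) ↔ Even (a + b) := by
  simp only [Nat.even_iff, Nat.dist]
  omega

theorem nonneg_neg_neg_one_pow_mul_iff {R : Type*} [Ring R] [LinearOrder R] [IsOrderedRing R]
    (k : ℕ) (a : R) : 0 ≤ -(-1) ^ k * a ↔ (Odd k → 0 ≤ a) ∧ (Even k → a ≤ 0) := by
  rcases Nat.even_or_odd k with hk | hk
  · simp [hk, hk.neg_one_pow, Nat.not_odd_iff_even.2 hk]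
  · simp [hk, hk.neg_one_pow, Nat.not_even_iff_odd.2 hk]

theorem addCompound_metzler_nsub1_general {n : ℕ} (A : Matrix (Fin n) (Fin n) ℝ) :
    IsMetzler (addCompound A (n - 1)) ↔
      ((∀ i j : Fin n, i ≠ j → Odd (Nat.dist i j) → 0 ≤ A i j) ∧
        (∀ i j : Fin n, i ≠ j → Even (Nat.dist i j) → A i j ≤ 0)) := by
  cases n with
  | zero =>
    exact ⟨fun _ => ⟨finZeroElim, finZeroElim⟩, fun _ α β h => (h (Subsingleton.elim α β)).elim⟩
  | succ n =>
    have key (i j : Fin (n + 1)) (hij : i ≠ j) :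
        0 ≤ addCompound A n (complSingleton j) (complSingleton i) ↔
          (Odd (Nat.dist i j) → 0 ≤ A i j) ∧ (Even (Nat.dist i j) → A i j ≤ 0) := by
      rw [addCompound_complSingleton A hij.symm, nonneg_neg_neg_one_pow_mul_iff,
        ← Nat.not_even_iff_odd, ← Nat.not_even_iff_odd, Nat.even_dist_iff, add_comm]
    rw [Nat.add_sub_cancel, ← isMetzler_submatrix_iff _ complSingleton_bijective]
    simp only [IsMetzler, submatrix_apply]
    exact ⟨fun h => ⟨fun i j hij => ((key i j hij).1 (h j i hij.symm)).1,
        fun i j hij => ((key i j hij).1 (h j i hij.symm)).2⟩,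
      fun ⟨h₁, h₂⟩ j i hji => (key i j hji.symm).2 ⟨h₁ i j hji.symm, h₂ i j hji.symm⟩⟩

/-- `A^{[n-1]}` is Metzler iff `a_{ij} ≥ 0` for all `i ≠ j` with `i - j` odd, and
`a_{ij} ≤ 0` for all `i ≠ j` with `i - j` even. -/
theorem addCompound_metzler_nsub1 {n : ℕ} (hn : 3 ≤ n) (A : Matrix (Fin n) (Fin n) ℝ) :
    IsMetzler (addCompound A (n - 1)) ↔
      ((∀ i j : Fin n, i ≠ j → Odd (Nat.dist i j) → 0 ≤ A i j) ∧
        (∀ i j : Fin n, i ≠ j → Even (Nat.dist i j) → A i j ≤ 0)) :=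
  addCompound_metzler_nsub1_general A
end
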